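/- arXiv:2502.04149 — 8 statements merged into one kernel-verified Lean document; each statement's English description precedes it below -/
import Mathlib

section
/- Let b > 1 be a real number and n ∈ ℕ. If 𝕒 and 𝕓 are consecutive admissible n-blocks (consecutive elements of 𝒟_A^n with respect to the lexicographic order) with 𝕒 <_lex 𝕓, then 𝕓(b) − 𝕒(b) ≤ b^{−n}. -/
/-- The beta transformation `T x = b x - ⌊b x⌋`. -/
noncomputable def bT (b : ℝ) (x : ℝ) : ℝ := b * x - ⌊b * x⌋

/-- `bdig b j x` is the `(j+1)`-th digit `d_{j+1}(x) = ⌊b · T^[j] x⌋` of the `b`-expansion. -/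
noncomputable def bdig (b : ℝ) (j : ℕ) (x : ℝ) : ℤ := ⌊b * (bT b)^[j] x⌋

/-- A block `a_0 ⋯ a_{n-1}` (0-indexed) is admissible if it consists of the
first `n` digits of the `b`-expansion of some `x ∈ [0,1)`. -/
def bAdm (b : ℝ) (n : ℕ) (a : ℕ → ℤ) : Prop :=
  ∃ x ∈ Set.Ico (0 : ℝ) 1, ∀ j < n, a j = bdig b j x

/-- The value `𝕒(b) = Σ_{k=1}^n a_k b^{-k}` of a block. -/
noncomputable def blockVal (b : ℝ) (n : ℕ) (a : ℕ → ℤ) : ℝ :=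
  ∑ j ∈ Finset.range n, (a j : ℝ) * b ^ (-((j : ℤ) + 1))

/-- Lexicographic order on blocks of length `n`. -/
def lexLt (n : ℕ) (a c : ℕ → ℤ) : Prop :=
  ∃ m < n, (∀ j < m, a j = c j) ∧ a m < c m

/-- Two admissible `n`-blocks are consecutive (with `a <_lex c`) if no admissible
`n`-block lies strictly between them. -/
def bConsecutive (b : ℝ) (n : ℕ) (a c : ℕ → ℤ) : Prop :=
  bAdm b n a ∧ bAdm b n c ∧ lexLt n a c ∧
    ¬ ∃ e : ℕ → ℤ, bAdm b n e ∧ lexLt n a e ∧ lexLt n e c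

lemma bT_mem (b x : ℝ) : bT b x ∈ Set.Ico (0:ℝ) 1 := by
  have h : bT b x = Int.fract (b * x) := rfl
  rw [h]; exact ⟨Int.fract_nonneg _, Int.fract_lt_one _⟩

lemma iter_mem (b : ℝ) {x : ℝ} (hx : x ∈ Set.Ico (0:ℝ) 1) (j : ℕ) :
    (bT b)^[j] x ∈ Set.Ico (0:ℝ) 1 := by
  induction j with
  | zero => exact hx
  | succ k ih => rw [Function.iterate_succ_apply']; exact bT_mem b _

lemma blockVal_dig (b : ℝ) (hb : 1 < b) (x : ℝ) (n : ℕ) :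
    blockVal b n (fun j => bdig b j x) = x - b ^ (-(n:ℤ)) * (bT b)^[n] x := by
  have hb0 : b ≠ 0 := by positivity
  induction n with
  | zero => simp [blockVal]
  | succ k ih =>
    rw [blockVal, Finset.sum_range_succ, ← blockVal, ih]
    have hT : (bT b)^[k+1] x = b * (bT b)^[k] x - (bdig b k x : ℝ) := by
      rw [Function.iterate_succ_apply']; simp [bT, bdig]
    rw [hT]
    have h1 : (-(((k:ℕ)+1 : ℕ):ℤ)) = -(k:ℤ) + -1 := by push_cast; ring
    have h2 : (-((k:ℤ) + 1)) = -(k:ℤ) + -1 := by ring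
    rw [h1, h2, zpow_add₀ hb0, zpow_neg_one]
    field_simp
    ring

lemma dig_mono (b : ℝ) (hb : 1 < b) (x t : ℝ) (hxt : x ≤ t) (n : ℕ) :
    (∀ j < n, bdig b j x = bdig b j t) ∨
      lexLt n (fun j => bdig b j x) (fun j => bdig b j t) := by
  by_cases hall : ∀ j < n, bdig b j x = bdig b j t
  · exact Or.inl hall
  · right
    push_neg at hall
    have hex : ∃ j, j < n ∧ bdig b j x ≠ bdig b j t := hall
    classical
    set m := Nat.find hex with hm
    obtain ⟨hmn, hne⟩ := Nat.find_spec hex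
    refine ⟨m, hmn, ?_, ?_⟩
    · intro j hj
      by_contra hne'
      exact absurd (Nat.find_min hex hj) (by simp [hj.trans hmn, hne'])
    · have hbv : blockVal b m (fun j => bdig b j x) = blockVal b m (fun j => bdig b j t) := by
        apply Finset.sum_congr rfl
        intro j hj
        have hj' : j < m := Finset.mem_range.mp hj
        have := Nat.find_min hex hj'
        push_neg at this
        simp only []
        rw [this (hj'.trans hmn)]
      have h1 := blockVal_dig b hb x m
      have h2 := blockVal_dig b hb t m
      have hc : (0:ℝ) < b ^ (-(m:ℤ)) := zpow_pos (by linarith) _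
      have hle : (bT b)^[m] x ≤ (bT b)^[m] t := by nlinarith [h1, h2, hbv]
      have hfl : bdig b m x ≤ bdig b m t := by
        apply Int.floor_le_floor
        nlinarith
      exact lt_of_le_of_ne hfl hne

/-- If `𝕒` and `𝕓` are consecutive admissible `n`-blocks with `𝕒 <_lex 𝕓`,
then `𝕓(b) − 𝕒(b) ≤ b^{−n}`. -/
theorem stmt0 (b : ℝ) (hb : 1 < b) (n : ℕ) (a c : ℕ → ℤ)
    (h : bConsecutive b n a c) :
    blockVal b n c - blockVal b n a ≤ b ^ (-(n : ℤ)) := by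
  obtain ⟨⟨x, hx, hax⟩, ⟨y, hy, hcy⟩, hlex, hnot⟩ := h
  have hbn : (0:ℝ) < b ^ (-(n:ℤ)) := zpow_pos (by linarith) _
  -- blockVal of a and c via their witnesses
  have hva : blockVal b n a = x - b ^ (-(n:ℤ)) * (bT b)^[n] x := by
    rw [show blockVal b n a = blockVal b n (fun j => bdig b j x) from
      Finset.sum_congr rfl fun j hj => by rw [hax j (Finset.mem_range.mp hj)]]
    exact blockVal_dig b hb x n
  have hvc : blockVal b n c = y - b ^ (-(n:ℤ)) * (bT b)^[n] y := by
    rw [show blockVal b n c = blockVal b n (fun j => bdig b j y) from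
      Finset.sum_congr rfl fun j hj => by rw [hcy j (Finset.mem_range.mp hj)]]
    exact blockVal_dig b hb y n
  obtain ⟨hTx0, hTx1⟩ := iter_mem b hx n
  obtain ⟨hTy0, hTy1⟩ := iter_mem b hy n
  -- suppose the gap is larger
  by_contra hgap
  push_neg at hgap
  set t : ℝ := blockVal b n a + b ^ (-(n:ℤ)) with ht
  have hxt : x < t := by rw [ht, hva]; nlinarith
  have hty : t < y := by
    have : t < blockVal b n c := by rw [ht]; linarith
    rw [hvc] at this; nlinarith
  have htmem : t ∈ Set.Ico (0:ℝ) 1 := ⟨le_trans hx.1 hxt.le, lt_trans hty hy.2⟩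
  set e : ℕ → ℤ := fun j => bdig b j t with he
  have hve : blockVal b n e = t - b ^ (-(n:ℤ)) * (bT b)^[n] t := blockVal_dig b hb t n
  obtain ⟨hTt0, hTt1⟩ := iter_mem b htmem n
  apply hnot
  refine ⟨e, ⟨t, htmem, fun j _ => rfl⟩, ?_, ?_⟩
  · -- lexLt n a e
    rcases dig_mono b hb x t hxt.le n with heq | hlt
    · -- digits equal would force t < t
      exfalso
      have : blockVal b n a = blockVal b n e := by
        apply Finset.sum_congr rfl
        intro j hj
        rw [hax j (Finset.mem_range.mp hj), he, heq j (Finset.mem_range.mp hj)]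
      rw [this, hve] at ht
      nlinarith
    · obtain ⟨m, hmn, hjeq, hmlt⟩ := hlt
      exact ⟨m, hmn, fun j hj => by rw [hax j (hj.trans hmn)]; exact hjeq j hj,
        by rw [hax m hmn]; exact hmlt⟩
  · -- lexLt n e c
    rcases dig_mono b hb t y hty.le n with heq | hlt
    · exfalso
      have : blockVal b n e = blockVal b n c := by
        apply Finset.sum_congr rfl
        intro j hj
        have hj' := Finset.mem_range.mp hj
        simp only [he, hcy j hj', heq j hj']
      have h1 : blockVal b n e ≤ t := by rw [hve]; nlinarith
      have h2 : t < blockVal b n c := by rw [ht]; linarith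
      linarith [this ▸ h1]
    · obtain ⟨m, hmn, hjeq, hmlt⟩ := hlt
      exact ⟨m, hmn, fun j hj => by rw [hcy j (hj.trans hmn)]; exact hjeq j hj,
        by rw [hcy m hmn]; exact hmlt⟩
end

section
/- Let b > 1, let k ≥ 2 and let 𝕒 ∈ 𝒟_A^{k−1}. Then the following are equivalent: (1) u_{𝕒,d} = 𝕒(b) + (d+1)b^{−k} (equivalently, the cylinder Δ(𝕒d) is an interval of length b^{−k}); (2) 𝕒 ∉ E_{k−1,d}. -/
/-- `a ∈ E_{k-1,d}`: `a` is an admissible `(k-1)`-block and for some `j < k`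
(1-indexed), the value of the block `a_j ⋯ a_{k-1} (d+1)` exceeds 1.
Here `a` is 0-indexed, so the suffix starts at a 0-indexed position `j < k-1`. -/
def memE (b : ℝ) (k : ℕ) (d : ℤ) (a : ℕ → ℤ) : Prop :=
  bAdm b (k - 1) a ∧ ∃ j < k - 1,
    1 < (∑ m ∈ Finset.range (k - 1 - j), (a (j + m) : ℝ) * b ^ (-((m : ℤ) + 1)))
        + (d + 1 : ℝ) * b ^ (-((k - 1 - j : ℕ) : ℤ) - 1)

/-- The cylinder `Δ(𝕒d)`: elements of `[0,1)` whose first `k-1` digits are given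
by `a` and whose `k`-th digit is `d`. -/
def cylinder (b : ℝ) (k : ℕ) (d : ℤ) (a : ℕ → ℤ) : Set ℝ :=
  {x | x ∈ Set.Ico (0 : ℝ) 1 ∧ (∀ j < k - 1, bdig b j x = a j) ∧ bdig b (k - 1) x = d}

open Set Topology

lemma zpow_neg_natCast_add_one {K : Type*} [DivisionRing K] (b : K) (m : ℕ) :
    b ^ (-((m : ℤ) + 1)) = (b ^ (m + 1))⁻¹ := by
  rw [zpow_neg, ← Nat.cast_succ, zpow_natCast]

section Digits

variable {b x : ℝ}

lemma bT_nonneg (b x : ℝ) : 0 ≤ bT b x :=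
  sub_nonneg.2 (Int.floor_le _)

lemma iterate_bT_nonneg (hx : 0 ≤ x) : ∀ n, 0 ≤ (bT b)^[n] x
  | 0 => hx
  | n + 1 => by rw [Function.iterate_succ_apply']; exact bT_nonneg _ _

lemma bdig_nonneg (hb : 0 ≤ b) (hx : 0 ≤ x) (j : ℕ) : 0 ≤ bdig b j x :=
  Int.floor_nonneg.2 (mul_nonneg hb (iterate_bT_nonneg hx j))

lemma bAdm.nonneg {n : ℕ} {a : ℕ → ℤ} (hb : 0 ≤ b) (ha : bAdm b n a) : ∀ j < n, 0 ≤ a j := by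
  obtain ⟨x, hx, hax⟩ := ha
  intro j hj
  rw [hax j hj]
  exact bdig_nonneg hb hx.1 j

end Digits

section BlockVal

variable {b : ℝ} {n : ℕ} {v w : ℕ → ℤ}

@[simp]
lemma blockVal_zero : blockVal b 0 w = 0 := by
  simp [blockVal]

lemma blockVal_succ : blockVal b (n + 1) w = blockVal b n w + w n * (b ^ (n + 1))⁻¹ := by
  rw [blockVal, blockVal, Finset.sum_range_succ, zpow_neg_natCast_add_one]

lemma blockVal_congr (h : ∀ j < n, v j = w j) : blockVal b n v = blockVal b n w :=
  Finset.sum_congr rfl fun j hj => by rw [h j (Finset.mem_range.1 hj)]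

lemma blockVal_le_blockVal (hb : 0 ≤ b) (h : ∀ j < n, v j ≤ w j) :
    blockVal b n v ≤ blockVal b n w :=
  Finset.sum_le_sum fun j hj =>
    mul_le_mul_of_nonneg_right (by exact_mod_cast h j (Finset.mem_range.1 hj)) (zpow_nonneg hb _)

lemma blockVal_mono (hb : 0 ≤ b) (hw : ∀ j < n, 0 ≤ w j) {m : ℕ} (hmn : m ≤ n) :
    blockVal b m w ≤ blockVal b n w :=
  Finset.sum_le_sum_of_subset_of_nonneg (Finset.range_subset_range.2 hmn) fun j hj _ =>
    mul_nonneg (by exact_mod_cast hw j (Finset.mem_range.1 hj)) (zpow_nonneg hb _)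

lemma blockVal_nonneg (hb : 0 ≤ b) (hw : ∀ j < n, 0 ≤ w j) : 0 ≤ blockVal b n w :=
  blockVal_zero (b := b) (w := w) ▸ blockVal_mono hb hw n.zero_le

lemma blockVal_shift (hb : b ≠ 0) {j : ℕ} (hjn : j ≤ n) :
    blockVal b (n - j) (fun i => w (j + i)) = b ^ j * (blockVal b n w - blockVal b j w) := by
  rw [blockVal, blockVal, blockVal, ← Finset.sum_Ico_eq_sub _ hjn, Finset.sum_Ico_eq_sum_range,
    Finset.mul_sum]
  refine Finset.sum_congr rfl fun i _ => ?_
  rw [zpow_neg_natCast_add_one, zpow_neg_natCast_add_one]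
  field_simp
  ring

end BlockVal

section DigitCylinder

variable {b x : ℝ} {n : ℕ} {w : ℕ → ℤ}

def digitCylinder (b : ℝ) (n : ℕ) (w : ℕ → ℤ) : Set ℝ :=
  {x | x ∈ Ico 0 1 ∧ ∀ j < n, bdig b j x = w j}

lemma iterate_bT_eq (hb : b ≠ 0) (h : ∀ j < n, bdig b j x = w j) :
    (bT b)^[n] x = b ^ n * (x - blockVal b n w) := by
  induction n with
  | zero => simp
  | succ n ih =>
    have hdig : ⌊b * (bT b)^[n] x⌋ = w n := h n n.lt_succ_self
    rw [Function.iterate_succ_apply', bT, hdig, ih fun j hj => h j (hj.trans n.lt_succ_self),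
      blockVal_succ]
    field_simp
    ring

lemma bdig_eq_iff (hb : 0 < b) (h : ∀ j < n, bdig b j x = w j) :
    bdig b n x = w n ↔
      x ∈ Ico (blockVal b (n + 1) w) (blockVal b (n + 1) w + (b ^ (n + 1))⁻¹) := by
  have hB : 0 < b ^ (n + 1) := by positivity
  rw [bdig, iterate_bT_eq hb.ne' h, ← mul_assoc, ← pow_succ', Int.floor_eq_iff, mem_Ico,
    ← div_le_iff₀' hB, ← lt_div_iff₀' hB, blockVal_succ, div_eq_mul_inv, div_eq_mul_inv]
  constructor <;> rintro ⟨h₁, h₂⟩ <;> constructor <;> linarith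

lemma mem_digitCylinder_iff (hb : 0 < b) :
    x ∈ digitCylinder b n w ↔
      ∀ m ≤ n, x ∈ Ico (blockVal b m w) (blockVal b m w + (b ^ m)⁻¹) := by
  induction n with
  | zero => simp [digitCylinder]
  | succ n ih =>
    have hcyl : x ∈ digitCylinder b (n + 1) w ↔ x ∈ digitCylinder b n w ∧ bdig b n x = w n := by
      simp only [digitCylinder, Nat.forall_lt_succ_right]
      exact and_assoc.symm
    simp only [← Nat.lt_succ_iff] at ih ⊢
    rw [hcyl, Nat.forall_lt_succ_right]
    exact ⟨fun ⟨hx, hn⟩ => ⟨ih.1 hx, (bdig_eq_iff hb hx.2).1 hn⟩,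
      fun ⟨hx, hn⟩ => have hx' := ih.2 hx; ⟨hx', (bdig_eq_iff hb hx'.2).2 hn⟩⟩

lemma sSup_digitCylinder_eq_iff (hb : 0 < b) (hw : ∀ j < n, 0 ≤ w j) :
    sSup (digitCylinder b n w) = blockVal b n w + (b ^ n)⁻¹ ↔
      ∀ m ≤ n, blockVal b n w + (b ^ n)⁻¹ ≤ blockVal b m w + (b ^ m)⁻¹ := by
  constructor
  · intro hsup m hmn
    by_contra! hlt
    have hle : sSup (digitCylinder b n w) ≤ blockVal b m w + (b ^ m)⁻¹ :=
      Real.sSup_le (fun x hx => ((mem_digitCylinder_iff hb).1 hx m hmn).2.le)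
        (add_nonneg (blockVal_nonneg hb.le fun j hj => hw j (hj.trans_le hmn)) (by positivity))
    linarith
  · intro hU
    suffices digitCylinder b n w = Ico (blockVal b n w) (blockVal b n w + (b ^ n)⁻¹) by
      rw [this, csSup_Ico (lt_add_of_pos_right _ (by positivity))]
    ext x
    rw [mem_digitCylinder_iff hb]
    exact ⟨fun hx => hx n le_rfl, fun hx m hmn =>
      ⟨(blockVal_mono hb.le hw hmn).trans hx.1, hx.2.trans_le (hU m hmn)⟩⟩

lemma blockVal_lt_one_of_eventually_bdig_eq (hb : 0 < b)
    (hc : ∀ j, ∀ᶠ ε in 𝓝[>] 0, bdig b j (1 - ε) = w j) (n : ℕ) : blockVal b n w < 1 := by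
  obtain ⟨ε, hdig, hε⟩ := (((Finset.range n).eventually_all.2 fun j _ => hc j).and
    (Ioo_mem_nhdsGT one_pos)).exists
  have hx : 1 - ε ∈ digitCylinder b n w :=
    ⟨⟨by linarith [hε.2], by linarith [hε.1]⟩, fun j hj => hdig j (Finset.mem_range.2 hj)⟩
  linarith [((mem_digitCylinder_iff hb).1 hx n le_rfl).1, hε.1]

end DigitCylinder

lemma hasSum_mul_zpow_neg_succ {b : ℝ} (hb : 1 < b) (d : ℝ) :
    HasSum (fun j : ℕ => d * b ^ (-((j : ℤ) + 1))) (d / (b - 1)) := by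
  have hgeom := (hasSum_geometric_of_lt_one (inv_nonneg.2 (zero_le_one.trans hb.le))
    (inv_lt_one_of_one_lt₀ hb)).mul_left (d * b⁻¹)
  have hb0 : b ≠ 0 := (zero_lt_one.trans hb).ne'
  have hb1 : b - 1 ≠ 0 := (sub_pos.2 hb).ne'
  have hterm : (fun j : ℕ => d * b ^ (-((j : ℤ) + 1))) = fun j => d * b⁻¹ * b⁻¹ ^ j := by
    ext j
    rw [zpow_neg_natCast_add_one, pow_succ', mul_inv, inv_pow]
    ring
  have hval : d / (b - 1) = d * b⁻¹ * (1 - b⁻¹)⁻¹ := by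
    field_simp
  rwa [hterm, hval]

lemma le_sub_one_of_forall_le_digit {b : ℝ} (hb : 1 < b) {c : ℕ → ℤ}
    (hc : ∀ j, ∀ᶠ ε in 𝓝[>] 0, bdig b j (1 - ε) = c j) {d' : ℤ} (hd' : ∀ j, d' ≤ c j) :
    (d' : ℝ) ≤ b - 1 := by
  have hb0 : 0 < b := zero_lt_one.trans hb
  have hsum : d' / (b - 1) ≤ 1 :=
    le_of_tendsto' (hasSum_mul_zpow_neg_succ hb d').tendsto_sum_nat fun n =>
      (blockVal_le_blockVal (n := n) (v := fun _ => d') hb0.le fun j _ => hd' j).trans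
        (blockVal_lt_one_of_eventually_bdig_eq hb0 hc n).le
  rwa [div_le_one (sub_pos.2 hb)] at hsum

section Cylinder

variable {b : ℝ} {n : ℕ} {d : ℤ} {a : ℕ → ℤ}

lemma memE_succ_iff (hb : 0 < b) (ha : bAdm b n a) :
    memE b (n + 1) d a ↔
      ∃ j < n, blockVal b j a + (b ^ j)⁻¹ < blockVal b n a + (d + 1) * (b ^ (n + 1))⁻¹ := by
  simp only [memE, Nat.add_sub_cancel, ha, true_and]
  refine exists_congr fun j => and_congr_right fun hj => ?_
  have hbj : 0 < b ^ j := by positivity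
  have hpow : b ^ (n + 1) = b ^ j * b ^ (n - j + 1) := by
    rw [← pow_add]
    congr 1
    omega
  have hsuffix : blockVal b (n - j) (fun i => a (j + i)) + (d + 1) * b ^ (-((n - j : ℕ) : ℤ) - 1)
      = b ^ j * (blockVal b n a + (d + 1) * (b ^ (n + 1))⁻¹ - blockVal b j a) := by
    rw [blockVal_shift hb.ne' hj.le, sub_eq_add_neg (-_), ← neg_add, zpow_neg_natCast_add_one,
      hpow]
    field_simp
    ring
  change 1 < blockVal b (n - j) (fun i => a (j + i)) + _ ↔ _
  rw [hsuffix, ← inv_lt_iff_one_lt_mul₀' hbj, lt_sub_iff_add_lt']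

lemma cylinder_succ_eq :
    cylinder b (n + 1) d a = digitCylinder b (n + 1) (Function.update a n d) := by
  ext x
  simp only [cylinder, digitCylinder, Nat.add_sub_cancel, Nat.forall_lt_succ_right,
    Function.update_self]
  exact and_congr_right' <| and_congr_left' <| forall₂_congr fun j hj => by
    rw [Function.update_of_ne hj.ne]

lemma sSup_cylinder_succ_eq_iff (hb : 0 < b) (ha : ∀ j < n, 0 ≤ a j) (hd : 0 ≤ d)
    (hdb : (d : ℝ) + 1 ≤ b) :
    sSup (cylinder b (n + 1) d a) = blockVal b n a + (d + 1) * (b ^ (n + 1))⁻¹ ↔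
      ∀ j < n, blockVal b n a + (d + 1) * (b ^ (n + 1))⁻¹ ≤ blockVal b j a + (b ^ j)⁻¹ := by
  have hw : ∀ j < n + 1, 0 ≤ Function.update a n d j := fun j hj => by
    rcases (Nat.lt_succ_iff.1 hj).lt_or_eq with hj | rfl
    · rw [Function.update_of_ne hj.ne]
      exact ha j hj
    · rwa [Function.update_self]
  have hprefix : ∀ m ≤ n, blockVal b m (Function.update a n d) = blockVal b m a := fun m hm =>
    blockVal_congr fun j hj => Function.update_of_ne (hj.trans_le hm).ne _ _
  have htop : blockVal b (n + 1) (Function.update a n d) + (b ^ (n + 1))⁻¹ =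
      blockVal b n a + (d + 1) * (b ^ (n + 1))⁻¹ := by
    rw [blockVal_succ, hprefix n le_rfl, Function.update_self]
    ring
  have hlast : (d + 1 : ℝ) * (b ^ (n + 1))⁻¹ ≤ (b ^ n)⁻¹ :=
    calc (d + 1 : ℝ) * (b ^ (n + 1))⁻¹ ≤ b * (b ^ (n + 1))⁻¹ := by gcongr
      _ = (b ^ n)⁻¹ := by rw [pow_succ', mul_inv, ← mul_assoc, mul_inv_cancel₀ hb.ne', one_mul]
  rw [cylinder_succ_eq, ← htop, sSup_digitCylinder_eq_iff hb hw, htop]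
  constructor
  · intro h j hj
    rw [← hprefix j hj.le]
    exact h j (by omega)
  · intro h m hm
    obtain hm | rfl | rfl : m < n ∨ m = n ∨ m = n + 1 := by omega
    · rw [hprefix m hm.le]
      exact h m hm
    · rw [hprefix m le_rfl]
      linarith
    · rw [htop]

end Cylinder

/-- `u_{𝕒,d} = 𝕒(b) + (d+1) b^{-k}` (equivalently, `Δ(𝕒d)` has length `b^{-k}`)
if and only if `𝕒 ∉ E_{k-1,d}`. -/
theorem stmt1 (b : ℝ) (hb : 1 < b) (k : ℕ) (hk : 2 ≤ k)
    (c : ℕ → ℤ)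
    (hc : ∀ j, ∀ᶠ ε in nhdsWithin (0 : ℝ) (Set.Ioi 0), bdig b j (1 - ε) = c j)
    (d' : ℤ) (hd' : IsLeast {z : ℤ | ∃ j, c j = z} d')
    (d : ℤ) (hd0 : 0 ≤ d) (hdd' : d ≤ d')
    (a : ℕ → ℤ) (ha : bAdm b (k - 1) a) :
    sSup (cylinder b k d a) = blockVal b (k - 1) a + (d + 1 : ℝ) * b ^ (-(k : ℤ))
      ↔ ¬ memE b k d a := by
  obtain ⟨n, rfl⟩ : ∃ n, k = n + 1 := ⟨k - 1, by omega⟩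
  have hb0 : 0 < b := zero_lt_one.trans hb
  have hdb : (d : ℝ) + 1 ≤ b := by
    have hd'b := le_sub_one_of_forall_le_digit hb hc fun j => hd'.2 ⟨j, rfl⟩
    linarith [(Int.cast_le (R := ℝ)).2 hdd']
  rw [Nat.add_sub_cancel] at ha ⊢
  rw [zpow_neg, zpow_natCast, sSup_cylinder_succ_eq_iff hb0 (ha.nonneg hb0.le) hd0 hdb,
    memE_succ_iff hb0 ha]
  simp only [not_exists, not_and, not_lt]
end

section
/- Let k ∈ ℕ and suppose property (C_n) holds for every n ∈ {1, 2, …, k+1}. Then for every admissible block a_1⋯a_k ∈ 𝒟^k, the block a_1⋯a_k 0 (of length k+1) is admissible; moreover V_{k+1}(ξ;0) is the disjoint union, over all admissible blocks a_1⋯a_k ∈ 𝒟^k, of the sets ξ^{−(k+1)}𝒳 + Σ_{j=1}^{k} ξ^{−j} a_j. -/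
/-!
A point `ξ^{-m} x + Σ_{j<m} ξ^{-(j+1)} a_j` whose tails `ξ^{-n} x + Σ_{i<n} ξ^{-(i+1)} a_{m-n+i}`
(`n < m`) all lie in `𝒳` loses one digit per application of `𝕋`: the digit shed at step `j` is
`a_j`, by uniqueness in the fundamental-domain property. Properties `(C_1), …, (C_{k+1})` say
exactly that these tails lie in `𝒳` when `a` is an admissible `k`-block followed by the digit `0`.
Conversely every `z` is recovered from its first `m` digits and `𝕋^m z` by
`z = ξ^{-m} 𝕋^m z + Σ_{j<m} ξ^{-(j+1)} d_j(z)`, so every `z ∈ V_{k+1}(ξ;0)` is of that form.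
-/

/-- The digit map of the `(ξ, 𝓛, 𝒳)`-expansion: `d(z)` is the unique element of the
lattice `L` with `ξ z − d(z) ∈ X`, extracted from the fundamental-domain property. -/
noncomputable def cdgF (L : AddSubgroup ℂ) (X : Set ℂ)
    (hfund : ∀ w : ℂ, ∃! d, d ∈ L ∧ w - d ∈ X) (ξ : ℂ) (z : ℂ) : ℂ :=
  (hfund (ξ * z)).choose

/-- The transformation `𝕋 z = ξ z − d(z)`. -/
noncomputable def cTF (L : AddSubgroup ℂ) (X : Set ℂ)
    (hfund : ∀ w : ℂ, ∃! d, d ∈ L ∧ w - d ∈ X) (ξ : ℂ) (z : ℂ) : ℂ :=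
  ξ * z - cdgF L X hfund ξ z

/-- `cdigF … n z` is the `(n+1)`-th digit `d_{n+1}(z) = d(𝕋^[n] z)`. -/
noncomputable def cdigF (L : AddSubgroup ℂ) (X : Set ℂ)
    (hfund : ∀ w : ℂ, ∃! d, d ∈ L ∧ w - d ∈ X) (ξ : ℂ) (n : ℕ) (z : ℂ) : ℂ :=
  cdgF L X hfund ξ ((cTF L X hfund ξ)^[n] z)

/-- A block `a_0 ⋯ a_{m-1}` is admissible if it occurs as a block of consecutive
digits of the expansion of some `z ∈ X`. -/
def cAdmF (L : AddSubgroup ℂ) (X : Set ℂ)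
    (hfund : ∀ w : ℂ, ∃! d, d ∈ L ∧ w - d ∈ X) (ξ : ℂ) (m : ℕ) (a : ℕ → ℂ) : Prop :=
  ∃ z ∈ X, ∃ m₀ : ℕ, ∀ j < m, a j = cdigF L X hfund ξ (m₀ + j) z

/-- Property `(C_n)`: for every admissible block `a_1 ⋯ a_{n-1}`,
`ξ^{-n} 𝒳 + ξ^{-(n-1)} a_{n-1} + ⋯ + ξ^{-1} a_1 ⊆ 𝒳`.
(For `n = 1` this is `(C_1) : ξ^{-1} 𝒳 ⊆ 𝒳`.) -/
def propCF (L : AddSubgroup ℂ) (X : Set ℂ)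
    (hfund : ∀ w : ℂ, ∃! d, d ∈ L ∧ w - d ∈ X) (ξ : ℂ) (n : ℕ) : Prop :=
  ∀ a : ℕ → ℂ, cAdmF L X hfund ξ (n - 1) a →
    ∀ x ∈ X, ξ ^ (-(n : ℤ)) * x + ∑ j ∈ Finset.range (n - 1), ξ ^ (-((j : ℤ) + 1)) * a j ∈ X

open Finset

noncomputable def blockPoint (ξ : ℂ) (m : ℕ) (a : ℕ → ℂ) (x : ℂ) : ℂ :=
  ξ ^ (-(m : ℤ)) * x + ∑ j ∈ range m, ξ ^ (-((j : ℤ) + 1)) * a j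

section BlockPoint

variable {ξ : ℂ} {m : ℕ} {a b : ℕ → ℂ} {x : ℂ}

@[simp]
lemma blockPoint_zero : blockPoint ξ 0 a x = x := by
  simp [blockPoint]

lemma blockPoint_congr (h : ∀ j < m, a j = b j) : blockPoint ξ m a x = blockPoint ξ m b x := by
  unfold blockPoint
  congr 1
  exact sum_congr rfl fun j hj => by rw [h j (mem_range.1 hj)]

lemma mul_blockPoint_succ (hξ : ξ ≠ 0) :
    ξ * blockPoint ξ (m + 1) a x = a 0 + blockPoint ξ m (fun i => a (i + 1)) x := by
  have hpow : ∀ n : ℤ, ξ * ξ ^ (-(n + 1)) = ξ ^ (-n) := fun n => by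
    rw [← zpow_one_add₀ hξ]; ring_nf
  simp only [blockPoint, sum_range_succ', mul_add, mul_sum, ← mul_assoc, Nat.cast_add,
    Nat.cast_one, Nat.cast_zero, hpow, neg_zero, zpow_zero, one_mul]
  ring

lemma blockPoint_extend_zero :
    blockPoint ξ (m + 1) (fun j => if j < m then a j else 0) x
      = ξ ^ (-((m : ℤ) + 1)) * x + ∑ j ∈ range m, ξ ^ (-((j : ℤ) + 1)) * a j := by
  simp only [blockPoint, sum_range_succ, lt_irrefl, if_false, mul_zero, add_zero, Nat.cast_add,
    Nat.cast_one]
  congr 1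
  exact sum_congr rfl fun j hj => by rw [if_pos (mem_range.1 hj)]

end BlockPoint

section Expansion

variable {L : AddSubgroup ℂ} {X : Set ℂ} {hfund : ∀ w : ℂ, ∃! d, d ∈ L ∧ w - d ∈ X} {ξ : ℂ}

lemma cdgF_mem (z : ℂ) : cdgF L X hfund ξ z ∈ L := (hfund (ξ * z)).choose_spec.1.1

lemma cTF_mem (z : ℂ) : cTF L X hfund ξ z ∈ X := (hfund (ξ * z)).choose_spec.1.2

lemma cdgF_eq {z d : ℂ} (hd : d ∈ L) (hX : ξ * z - d ∈ X) : cdgF L X hfund ξ z = d :=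
  ((hfund (ξ * z)).choose_spec.2 d ⟨hd, hX⟩).symm

lemma cdigF_zero (z : ℂ) : cdigF L X hfund ξ 0 z = cdgF L X hfund ξ z := rfl

lemma cdigF_succ (n : ℕ) (z : ℂ) :
    cdigF L X hfund ξ (n + 1) z = cdigF L X hfund ξ n (cTF L X hfund ξ z) := rfl

lemma cAdmF.mem {m : ℕ} {a : ℕ → ℂ} (ha : cAdmF L X hfund ξ m a) {j : ℕ} (hj : j < m) :
    a j ∈ L := by
  obtain ⟨z, -, m₀, hdig⟩ := ha
  exact hdig j hj ▸ cdgF_mem _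

lemma cAdmF.shift {m s p : ℕ} {a : ℕ → ℂ} (ha : cAdmF L X hfund ξ m a) (h : s + p ≤ m) :
    cAdmF L X hfund ξ p (fun i => a (s + i)) := by
  obtain ⟨z, hz, m₀, hdig⟩ := ha
  exact ⟨z, hz, m₀ + s, fun j hj => by rw [add_assoc]; exact hdig (s + j) (by omega)⟩

lemma eq_blockPoint_digits (hξ : ξ ≠ 0) (n : ℕ) (z : ℂ) :
    z = blockPoint ξ n (fun j => cdigF L X hfund ξ j z) ((cTF L X hfund ξ)^[n] z) := by
  induction n generalizing z with
  | zero => simp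
  | succ n ih =>
    refine mul_left_cancel₀ hξ ?_
    rw [mul_blockPoint_succ hξ, Function.iterate_succ_apply]
    simp only [cdigF_succ, cdigF_zero, ← ih, cTF, add_sub_cancel]

lemma cdgF_blockPoint_succ (hξ : ξ ≠ 0) {m : ℕ} {a : ℕ → ℂ} {x : ℂ} (ha : a 0 ∈ L)
    (hX : blockPoint ξ m (fun i => a (i + 1)) x ∈ X) :
    cdgF L X hfund ξ (blockPoint ξ (m + 1) a x) = a 0 :=
  cdgF_eq ha (by rwa [mul_blockPoint_succ hξ, add_sub_cancel_left])

lemma cTF_blockPoint_succ (hξ : ξ ≠ 0) {m : ℕ} {a : ℕ → ℂ} {x : ℂ} (ha : a 0 ∈ L)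
    (hX : blockPoint ξ m (fun i => a (i + 1)) x ∈ X) :
    cTF L X hfund ξ (blockPoint ξ (m + 1) a x) = blockPoint ξ m (fun i => a (i + 1)) x := by
  rw [cTF, cdgF_blockPoint_succ hξ ha hX, mul_blockPoint_succ hξ, add_sub_cancel_left]

lemma cdigF_blockPoint (hξ : ξ ≠ 0) {m : ℕ} {a : ℕ → ℂ} {x : ℂ} (hL : ∀ j < m, a j ∈ L)
    (hX : ∀ n < m, blockPoint ξ n (fun i => a (m - n + i)) x ∈ X) :
    ∀ j < m, cdigF L X hfund ξ j (blockPoint ξ m a x) = a j := by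
  induction m generalizing a with
  | zero => simp
  | succ m ih =>
    have htail : ∀ n ≤ m, blockPoint ξ n (fun i => a (m - n + i + 1)) x ∈ X := fun n hn => by
      rw [blockPoint_congr fun i _ => congrArg a (by omega : m - n + i + 1 = m + 1 - n + i)]
      exact hX n (by omega)
    have ha0 : a 0 ∈ L := hL 0 (by omega)
    have hnext : blockPoint ξ m (fun i => a (i + 1)) x ∈ X := by simpa using htail m le_rfl
    rintro (_ | j) hj
    · exact cdgF_blockPoint_succ hξ ha0 hnext
    · rw [cdigF_succ, cTF_blockPoint_succ hξ ha0 hnext]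
      exact ih (a := fun i => a (i + 1)) (fun i hi => hL _ (by omega))
        (fun n hn => htail n hn.le) j (by omega)

lemma eq_extend_zero_of_cdigF_eq_zero (hξ : ξ ≠ 0) {k : ℕ} {z : ℂ}
    (hz : cdigF L X hfund ξ k z = 0) :
    z = ξ ^ (-((k : ℤ) + 1)) * (cTF L X hfund ξ)^[k + 1] z
      + ∑ j ∈ range k, ξ ^ (-((j : ℤ) + 1)) * cdigF L X hfund ξ j z := by
  rw [← blockPoint_extend_zero]
  refine (eq_blockPoint_digits hξ (k + 1) z).trans (blockPoint_congr fun j hj => ?_)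
  split_ifs with hjk
  · rfl
  · rw [show j = k by omega, hz]

variable {k : ℕ}

lemma tail_mem_of_propCF (hC : ∀ n : ℕ, 1 ≤ n → n ≤ k + 1 → propCF L X hfund ξ n)
    {a : ℕ → ℂ} (ha : cAdmF L X hfund ξ k a) {x : ℂ} (hx : x ∈ X) :
    ∀ n ≤ k + 1,
      blockPoint ξ n (fun i => if k + 1 - n + i < k then a (k + 1 - n + i) else 0) x ∈ X := by
  rintro (_ | p) hp
  · simpa using hx
  · have hb := hC (p + 1) (by omega) hp (fun i => a (k - p + i)) (ha.shift (by omega)) x hx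
    rw [blockPoint_congr (b := fun i => if i < p then a (k - p + i) else 0) fun i _ => ?_,
      blockPoint_extend_zero]
    · simpa using hb
    · simp only [show k + 1 - (p + 1) + i = k - p + i by omega]
      split_ifs <;> first | rfl | omega

lemma extend_zero_mem_and_cdigF (hξ : ξ ≠ 0)
    (hC : ∀ n : ℕ, 1 ≤ n → n ≤ k + 1 → propCF L X hfund ξ n)
    {a : ℕ → ℂ} (ha : cAdmF L X hfund ξ k a) {x : ℂ} (hx : x ∈ X) :
    ξ ^ (-((k : ℤ) + 1)) * x + ∑ j ∈ range k, ξ ^ (-((j : ℤ) + 1)) * a j ∈ X ∧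
    ∀ j < k + 1, cdigF L X hfund ξ j
      (ξ ^ (-((k : ℤ) + 1)) * x + ∑ j ∈ range k, ξ ^ (-((j : ℤ) + 1)) * a j)
        = if j < k then a j else 0 := by
  rw [← blockPoint_extend_zero]
  refine ⟨by simpa using tail_mem_of_propCF hC ha hx (k + 1) le_rfl,
    cdigF_blockPoint hξ (fun j hj => ?_) fun n hn => tail_mem_of_propCF hC ha hx n hn.le⟩
  split_ifs with hjk
  · exact ha.mem hjk
  · exact zero_mem L

end Expansion

/-- If `(C_n)` holds for all `n ∈ {1, …, k+1}`, then every admissible `k`-block extended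
by the digit `0` is admissible, and `V_{k+1}(ξ;0)` is the disjoint union over admissible
`k`-blocks `a` of the translates `ξ^{-(k+1)} 𝒳 + Σ_{j=1}^k ξ^{-j} a_j`. -/
theorem stmt7 (ξ : ℂ) (hξ : 1 < ‖ξ‖) (L : AddSubgroup ℂ) (X : Set ℂ)
    (h0 : (0 : ℂ) ∈ X)
    (hfund : ∀ w : ℂ, ∃! d, d ∈ L ∧ w - d ∈ X)
    (k : ℕ)
    (hC : ∀ n : ℕ, 1 ≤ n → n ≤ k + 1 → propCF L X hfund ξ n) :
    (∀ a : ℕ → ℂ, cAdmF L X hfund ξ k a →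
        cAdmF L X hfund ξ (k + 1) (fun j => if j < k then a j else 0)) ∧
    ({z | z ∈ X ∧ cdigF L X hfund ξ k z = 0}
      = ⋃ a ∈ {a : ℕ → ℂ | cAdmF L X hfund ξ k a},
          (fun x : ℂ => ξ ^ (-((k : ℤ) + 1)) * x
            + ∑ j ∈ Finset.range k, ξ ^ (-((j : ℤ) + 1)) * a j) '' X) ∧
    (∀ a a' : ℕ → ℂ, cAdmF L X hfund ξ k a → cAdmF L X hfund ξ k a' →
        (∃ j < k, a j ≠ a' j) →
        Disjoint
          ((fun x : ℂ => ξ ^ (-((k : ℤ) + 1)) * x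
            + ∑ j ∈ Finset.range k, ξ ^ (-((j : ℤ) + 1)) * a j) '' X)
          ((fun x : ℂ => ξ ^ (-((k : ℤ) + 1)) * x
            + ∑ j ∈ Finset.range k, ξ ^ (-((j : ℤ) + 1)) * a' j) '' X)) := by
  have hξ0 : ξ ≠ 0 := norm_pos_iff.mp (one_pos.trans hξ)
  have key := fun a (ha : cAdmF L X hfund ξ k a) x (hx : x ∈ X) =>
    extend_zero_mem_and_cdigF hξ0 hC ha hx
  refine ⟨fun a ha => ?_, ?_, ?_⟩
  · obtain ⟨hmem, hdig⟩ := key a ha 0 h0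
    exact ⟨_, hmem, 0, fun j hj => by rw [zero_add, hdig j hj]⟩
  · ext z
    simp only [Set.mem_ofPred_eq, Set.mem_iUnion, Set.mem_image, exists_prop]
    constructor
    · rintro ⟨hz, hzk⟩
      refine ⟨_, ⟨z, hz, 0, fun j _ => by rw [zero_add]⟩, _, ?_,
        (eq_extend_zero_of_cdigF_eq_zero hξ0 hzk).symm⟩
      rw [Function.iterate_succ_apply']
      exact cTF_mem _
    · rintro ⟨a, ha, x, hx, rfl⟩
      exact ⟨(key a ha x hx).1, by simpa using (key a ha x hx).2 k k.lt_succ_self⟩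
  · rintro a a' ha ha' ⟨j, hj, hne⟩
    refine Set.disjoint_left.2 ?_
    rintro _ ⟨x, hx, rfl⟩ ⟨x', hx', hxx'⟩
    beta_reduce at hxx'
    have hdig := (key a' ha' x' hx').2 j (by omega)
    rw [hxx', (key a ha x hx).2 j (by omega), if_pos hj, if_pos hj] at hdig
    exact hne hdig
end

section
/- Let ξ = re^{iθ} with r > 1 and θ ∈ [0,π/4], and let 𝔻 := ⋃_{d∈𝒟} (closure(𝒳) + d). If 𝔻 is a rectangle, i.e. 𝔻 = {a + bi : a ∈ [x₁,x₂], b ∈ [y₁,y₂]} for some reals x₁ < x₂ and y₁ < y₂, then 𝔻 is a square, i.e. x₂ − x₁ = y₂ − y₁. -/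
/-!
Writing `ξ = p + q i` with `p = r cos θ > 0` and `q = r sin θ ≥ 0`, both `Re(ξz) = p a - q b` and
`Im(ξz) = q a + p b` range, for `z = a + b i ∈ 𝒳`, over a set squeezed between `(-M, M)` and
`[-M, M)` with `M = (p + q)/2`. Rounding is right-continuous, so the real and imaginary parts of
the digits form one and the same set of integers. On the other hand, if `𝔻` is the rectangle
`[x₁, x₂] × [y₁, y₂]`, then `x₁ + 1/2` and `x₂ - 1/2` are the least and greatest real parts of
digits, and `y₁ + 1/2`, `y₂ - 1/2` the least and greatest imaginary parts; hence `x₁ = y₁` and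
`x₂ = y₂`.
-/

/-- The fundamental domain `𝒳 = {a + b i : a, b ∈ [−1/2, 1/2)}` of the lattice `ℤ[i]`. -/
def cX : Set ℂ :=
  {z : ℂ | z.re ∈ Set.Ico (-(1 / 2) : ℝ) (1 / 2) ∧ z.im ∈ Set.Ico (-(1 / 2) : ℝ) (1 / 2)}

/-- The digit map: `d(z) = ⌊Re(ξz) + 1/2⌋ + ⌊Im(ξz) + 1/2⌋ i`. -/
noncomputable def cdg (ξ z : ℂ) : ℂ :=
  (⌊(ξ * z).re + 1 / 2⌋ : ℤ) + (⌊(ξ * z).im + 1 / 2⌋ : ℤ) * Complex.I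

/-- The transformation `𝕋 z = ξ z − d(z)`. -/
noncomputable def cT (ξ z : ℂ) : ℂ := ξ * z - cdg ξ z

/-- `cdig ξ n z` is the `(n+1)`-th digit `d_{n+1}(z) = d(𝕋^[n] z)`. -/
noncomputable def cdig (ξ : ℂ) (n : ℕ) (z : ℂ) : ℂ := cdg ξ ((cT ξ)^[n] z)

/-- The digit set `𝒟 = {d(z) : z ∈ 𝒳}`. -/
noncomputable def cD (ξ : ℂ) : Set ℂ := cdg ξ '' cX

/-- `ξ` has a square digit set of size `N`. -/
noncomputable def squareDS (ξ : ℂ) (N : ℕ) : Prop :=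
  cD ξ = {w : ℂ | ∃ a b : ℤ, w = (a : ℂ) + (b : ℂ) * Complex.I ∧ |a| ≤ (N : ℤ) ∧ |b| ≤ (N : ℤ)}

open Set Complex

lemma cdg_re (ξ z : ℂ) : (cdg ξ z).re = ⌊(ξ * z).re + 1 / 2⌋ := by
  simp [cdg]

lemma cdg_im (ξ z : ℂ) : (cdg ξ z).im = ⌊(ξ * z).im + 1 / 2⌋ := by
  simp [cdg]

lemma Int.floor_add_image_eq_of_Ioo_subset_of_subset_Ico {S : Set ℝ} {a b : ℝ} (c : ℝ)
    (hIoo : Ioo a b ⊆ S) (hIco : S ⊆ Ico a b) :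
    (fun t => ⌊t + c⌋) '' S = (fun t => ⌊t + c⌋) '' Ico a b := by
  refine (image_mono hIco).antisymm ?_
  rintro _ ⟨t, ⟨hat, htb⟩, rfl⟩
  obtain ⟨t', htt', ht'⟩ := exists_between
    (lt_min htb (by linarith [Int.lt_floor_add_one (t + c)] : t < ⌊t + c⌋ + 1 - c))
  refine ⟨t', hIoo ⟨hat.trans_lt htt', ht'.trans_le (min_le_left _ _)⟩, ?_⟩
  refine Int.floor_eq_iff.mpr ⟨(Int.floor_le _).trans (by linarith), ?_⟩
  linarith [ht'.trans_le (min_le_right _ _)]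

lemma closure_cX : closure cX = Icc (-(1 / 2) : ℝ) (1 / 2) ×ℂ Icc (-(1 / 2) : ℝ) (1 / 2) := by
  rw [show cX = Ico (-(1 / 2) : ℝ) (1 / 2) ×ℂ Ico (-(1 / 2) : ℝ) (1 / 2) from rfl,
    closure_reProdIm, closure_Ico (by norm_num)]

section DigitSet

variable {ξ : ℂ}

lemma re_mul_mem_Ico (hre : 0 < ξ.re) (him : 0 ≤ ξ.im) {z : ℂ} (hz : z ∈ cX) :
    (ξ * z).re ∈ Ico (-((ξ.re + ξ.im) / 2)) ((ξ.re + ξ.im) / 2) := by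
  obtain ⟨⟨ha, ha'⟩, ⟨hb, hb'⟩⟩ := hz
  rw [mul_re]
  constructor
  · nlinarith [mul_nonneg hre.le (by linarith : 0 ≤ z.re + 1 / 2),
      mul_nonneg him (by linarith : 0 ≤ 1 / 2 - z.im)]
  · nlinarith [mul_pos hre (by linarith : 0 < 1 / 2 - z.re),
      mul_nonneg him (by linarith : 0 ≤ z.im + 1 / 2)]

lemma im_mul_mem_Ico (hre : 0 < ξ.re) (him : 0 ≤ ξ.im) {z : ℂ} (hz : z ∈ cX) :
    (ξ * z).im ∈ Ico (-((ξ.re + ξ.im) / 2)) ((ξ.re + ξ.im) / 2) := by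
  obtain ⟨⟨ha, ha'⟩, ⟨hb, hb'⟩⟩ := hz
  rw [mul_im]
  constructor
  · nlinarith [mul_nonneg hre.le (by linarith : 0 ≤ z.im + 1 / 2),
      mul_nonneg him (by linarith : 0 ≤ z.re + 1 / 2)]
  · nlinarith [mul_pos hre (by linarith : 0 < 1 / 2 - z.im),
      mul_nonneg him (by linarith : 0 ≤ 1 / 2 - z.re)]

lemma Ioo_subset_re_mul_image (h : 0 < ξ.re + ξ.im) :
    Ioo (-((ξ.re + ξ.im) / 2)) ((ξ.re + ξ.im) / 2) ⊆ (fun z => (ξ * z).re) '' cX := by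
  rintro t ⟨ht, ht'⟩
  set u := t / (ξ.re + ξ.im)
  have hu : -(1 / 2) < u ∧ u < 1 / 2 := by
    constructor <;> [rw [lt_div_iff₀ h]; rw [div_lt_iff₀ h]] <;> linarith
  refine ⟨⟨u, -u⟩, ⟨⟨hu.1.le, hu.2⟩, ⟨by linarith, by linarith⟩⟩, ?_⟩
  have hu_mul : u * (ξ.re + ξ.im) = t := div_mul_cancel₀ _ h.ne'
  simp only [mul_re]
  linear_combination hu_mul

lemma Ioo_subset_im_mul_image (h : 0 < ξ.re + ξ.im) :
    Ioo (-((ξ.re + ξ.im) / 2)) ((ξ.re + ξ.im) / 2) ⊆ (fun z => (ξ * z).im) '' cX := by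
  rintro t ⟨ht, ht'⟩
  set u := t / (ξ.re + ξ.im)
  have hu : -(1 / 2) < u ∧ u < 1 / 2 := by
    constructor <;> [rw [lt_div_iff₀ h]; rw [div_lt_iff₀ h]] <;> linarith
  refine ⟨⟨u, u⟩, ⟨⟨hu.1.le, hu.2⟩, ⟨hu.1.le, hu.2⟩⟩, ?_⟩
  have hu_mul : u * (ξ.re + ξ.im) = t := div_mul_cancel₀ _ h.ne'
  simp only [mul_im]
  linear_combination hu_mul

lemma re_image_cD_eq_im_image_cD (hre : 0 < ξ.re) (him : 0 ≤ ξ.im) :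
    re '' cD ξ = im '' cD ξ := by
  have hre_cD : re '' cD ξ =
      Int.cast '' ((fun t => ⌊t + 1 / 2⌋) '' ((fun z => (ξ * z).re) '' cX)) := by
    simp only [cD, image_image, cdg_re]
  have him_cD : im '' cD ξ =
      Int.cast '' ((fun t => ⌊t + 1 / 2⌋) '' ((fun z => (ξ * z).im) '' cX)) := by
    simp only [cD, image_image, cdg_im]
  have hpos : 0 < ξ.re + ξ.im := add_pos_of_pos_of_nonneg hre him
  rw [hre_cD, him_cD,
    Int.floor_add_image_eq_of_Ioo_subset_of_subset_Ico _ (Ioo_subset_re_mul_image hpos)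
      (image_subset_iff.2 fun _ => re_mul_mem_Ico hre him),
    Int.floor_add_image_eq_of_Ioo_subset_of_subset_Ico _ (Ioo_subset_im_mul_image hpos)
      (image_subset_iff.2 fun _ => im_mul_mem_Ico hre him)]

end DigitSet

lemma re_image_reProdIm {s t : Set ℝ} (ht : t.Nonempty) : re '' (s ×ℂ t) = s := by
  refine subset_antisymm (image_subset_iff.2 fun _ hz => hz.1) fun x hx => ?_
  obtain ⟨y, hy⟩ := ht
  exact ⟨⟨x, y⟩, ⟨hx, hy⟩, rfl⟩

lemma im_image_reProdIm {s t : Set ℝ} (hs : s.Nonempty) : im '' (s ×ℂ t) = t := by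
  refine subset_antisymm (image_subset_iff.2 fun _ hz => hz.2) fun y hy => ?_
  obtain ⟨x, hx⟩ := hs
  exact ⟨⟨x, y⟩, ⟨hx, hy⟩, rfl⟩

lemma re_image_biUnion_add_closure_cX (D : Set ℂ) :
    re '' ⋃ d ∈ D, (fun z => z + d) '' closure cX =
      ⋃ x ∈ re '' D, Icc (x - 1 / 2) (x + 1 / 2) := by
  simp only [biUnion_image, image_iUnion₂, image_image, add_re]
  refine iUnion₂_congr fun d _ => ?_
  rw [← image_image (· + d.re) re, closure_cX, re_image_reProdIm (nonempty_Icc.2 (by norm_num)),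
    image_add_const_Icc]
  congr 1 <;> ring

lemma im_image_biUnion_add_closure_cX (D : Set ℂ) :
    im '' ⋃ d ∈ D, (fun z => z + d) '' closure cX =
      ⋃ y ∈ im '' D, Icc (y - 1 / 2) (y + 1 / 2) := by
  simp only [biUnion_image, image_iUnion₂, image_image, add_im]
  refine iUnion₂_congr fun d _ => ?_
  rw [← image_image (· + d.im) im, closure_cX, im_image_reProdIm (nonempty_Icc.2 (by norm_num)),
    image_add_const_Icc]
  congr 1 <;> ring

lemma isLeast_and_isGreatest_of_biUnion_Icc_eq {E : Set ℝ} {ρ x₁ x₂ : ℝ} (hρ : 0 ≤ ρ)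
    (hx : x₁ ≤ x₂) (h : ⋃ e ∈ E, Icc (e - ρ) (e + ρ) = Icc x₁ x₂) :
    IsLeast E (x₁ + ρ) ∧ IsGreatest E (x₂ - ρ) := by
  have hbounds : ∀ e ∈ E, x₁ + ρ ≤ e ∧ e ≤ x₂ - ρ := fun e he => by
    have hsub : Icc (e - ρ) (e + ρ) ⊆ Icc x₁ x₂ :=
      h ▸ subset_biUnion_of_mem (u := fun e => Icc (e - ρ) (e + ρ)) he
    rw [Icc_subset_Icc_iff (by linarith)] at hsub
    constructor <;> linarith
  have hcover : ∀ x ∈ Icc x₁ x₂, ∃ e ∈ E, x ∈ Icc (e - ρ) (e + ρ) := fun x hx => by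
    obtain ⟨e, he, hxe⟩ := mem_iUnion₂.1 (h ▸ hx)
    exact ⟨e, he, hxe⟩
  obtain ⟨e₁, he₁, hx₁e₁, -⟩ := hcover x₁ (left_mem_Icc.2 hx)
  obtain ⟨e₂, he₂, -, hx₂e₂⟩ := hcover x₂ (right_mem_Icc.2 hx)
  refine ⟨⟨?_, fun e he => (hbounds e he).1⟩, ⟨?_, fun e he => (hbounds e he).2⟩⟩
  · convert he₁ using 1
    linarith [(hbounds e₁ he₁).1]
  · convert he₂ using 1
    linarith [(hbounds e₂ he₂).2]

/-- If `𝔻 = ⋃_{d ∈ 𝒟}(closure 𝒳 + d)` is a rectangle, then it is a square. -/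
theorem stmt8 (r θ : ℝ) (hr : 1 < r) (hθ : θ ∈ Set.Icc 0 (Real.pi / 4))
    (ξ : ℂ) (hξ : ξ = (r : ℂ) * Complex.exp (θ * Complex.I))
    (x₁ x₂ y₁ y₂ : ℝ) (hx : x₁ < x₂) (hy : y₁ < y₂)
    (hrect : (⋃ d ∈ cD ξ, (fun z : ℂ => z + d) '' closure cX)
      = {z : ℂ | z.re ∈ Set.Icc x₁ x₂ ∧ z.im ∈ Set.Icc y₁ y₂}) :
    x₂ - x₁ = y₂ - y₁ := by
  obtain ⟨hθ0, hθ4⟩ := hθ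
  have hre : 0 < ξ.re := by
    rw [hξ, re_ofReal_mul, exp_ofReal_mul_I_re]
    refine mul_pos (by linarith) (Real.cos_pos_of_mem_Ioo ⟨?_, ?_⟩) <;> linarith [Real.pi_pos]
  have him : 0 ≤ ξ.im := by
    rw [hξ, im_ofReal_mul, exp_ofReal_mul_I_im]
    exact mul_nonneg (by linarith) (Real.sin_nonneg_of_nonneg_of_le_pi hθ0 (by linarith))
  have hX := isLeast_and_isGreatest_of_biUnion_Icc_eq (ρ := 1 / 2) (by norm_num) hx.le (by
    rw [← re_image_biUnion_add_closure_cX, hrect]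
    exact re_image_reProdIm (s := Icc x₁ x₂) (nonempty_Icc.2 hy.le))
  have hY := isLeast_and_isGreatest_of_biUnion_Icc_eq (ρ := 1 / 2) (by norm_num) hy.le (by
    rw [← im_image_biUnion_add_closure_cX, hrect]
    exact im_image_reProdIm (t := Icc y₁ y₂) (nonempty_Icc.2 hx.le))
  rw [re_image_cD_eq_im_image_cD hre him] at hX
  linarith [hX.1.unique hY.1, hX.2.unique hY.2]
end

section
/- Let ξ = re^{iθ} with r > 1 and θ ∈ [0,π/4], and let N ≥ 1 be an integer. Then ξ has a square digit set of size N if and only if (2N−1)(c+s) < r ≤ (2N+1)/(c+s). -/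
private lemma digit_eq {p q a b : ℤ}
    (h : (p:ℂ) + (q:ℂ) * Complex.I = (a:ℂ) + (b:ℂ) * Complex.I) : p = a ∧ q = b := by
  have h1 := congrArg Complex.re h
  have h2 := congrArg Complex.im h
  simp at h1 h2
  exact ⟨by exact_mod_cast h1, by exact_mod_cast h2⟩

set_option maxHeartbeats 1000000 in
/-- `ξ = r e^{iθ}` has a square digit set of size `N ≥ 1` if and only if
`(2N−1)(cos θ + sin θ) < r ≤ (2N+1)/(cos θ + sin θ)`. -/
theorem stmt9 (r θ : ℝ) (hr : 1 < r) (hθ : θ ∈ Set.Icc 0 (Real.pi / 4))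
    (ξ : ℂ) (hξ : ξ = (r : ℂ) * Complex.exp (θ * Complex.I))
    (N : ℕ) (hN : 1 ≤ N) :
    squareDS ξ N ↔
      ((2 * (N : ℝ) - 1) * (Real.cos θ + Real.sin θ) < r ∧
        r ≤ (2 * (N : ℝ) + 1) / (Real.cos θ + Real.sin θ)) := by
  obtain ⟨hθ0, hθ4⟩ := hθ
  have hπ := Real.pi_pos
  set c := Real.cos θ with hcdef
  set s := Real.sin θ with hsdef
  have hr0 : (0:ℝ) < r := lt_trans one_pos hr
  have hc : 0 < c := Real.cos_pos_of_mem_Ioo ⟨by linarith, by linarith⟩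
  have hs : 0 ≤ s := Real.sin_nonneg_of_nonneg_of_le_pi hθ0 (by linarith)
  have hc1 : c ≤ 1 := Real.cos_le_one θ
  have hs1 : s ≤ 1 := Real.sin_le_one θ
  have hsc : s ^ 2 + c ^ 2 = 1 := Real.sin_sq_add_cos_sq θ
  have hcs1 : 1 ≤ c + s := by nlinarith
  have hcs0 : 0 < c + s := by linarith
  have hN1 : (1:ℝ) ≤ (N:ℝ) := by exact_mod_cast hN
  have hre : ∀ z : ℂ, (ξ * z).re = r * (c * z.re - s * z.im) := by
    intro z
    rw [hξ, Complex.exp_mul_I]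
    simp [Complex.mul_re, Complex.mul_im, Complex.cos_ofReal_re, Complex.sin_ofReal_re]
    ring
  have him : ∀ z : ℂ, (ξ * z).im = r * (s * z.re + c * z.im) := by
    intro z
    rw [hξ, Complex.exp_mul_I]
    simp [Complex.mul_re, Complex.mul_im, Complex.cos_ofReal_re, Complex.sin_ofReal_re]
    ring
  constructor
  · intro hsq
    rw [squareDS] at hsq
    constructor
    · -- lower bound from digit (N, N)
      have hmem : ((N:ℂ) + (N:ℂ) * Complex.I) ∈ cD ξ := by
        rw [hsq]
        refine ⟨(N:ℤ), (N:ℤ), by push_cast; ring, ?_, ?_⟩ <;>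
          simp [abs_of_nonneg (Int.ofNat_nonneg N)]
      obtain ⟨z, ⟨⟨hu1, hu2⟩, hv1, hv2⟩, hdg⟩ := hmem
      have hdg' : ((⌊(ξ * z).re + 1 / 2⌋ : ℤ) : ℂ) + ((⌊(ξ * z).im + 1 / 2⌋ : ℤ) : ℂ) * Complex.I
          = ((N:ℤ):ℂ) + ((N:ℤ):ℂ) * Complex.I := by
        rw [← cdg, hdg]; push_cast; ring
      obtain ⟨ha, hb⟩ := digit_eq hdg'
      have hx : (N:ℝ) ≤ (ξ * z).re + 1 / 2 := by
        have := Int.floor_le ((ξ * z).re + 1 / 2)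
        rw [ha] at this
        exact_mod_cast this
      have hy : (N:ℝ) ≤ (ξ * z).im + 1 / 2 := by
        have := Int.floor_le ((ξ * z).im + 1 / 2)
        rw [hb] at this
        exact_mod_cast this
      rw [hre z] at hx
      rw [him z] at hy
      have e : c * (r * (c * z.re - s * z.im)) + s * (r * (s * z.re + c * z.im))
          = r * z.re := by linear_combination (r * z.re) * hsc
      nlinarith [mul_le_mul_of_nonneg_left hx hc.le, mul_le_mul_of_nonneg_left hy hs,
        mul_lt_mul_of_pos_left hu2 hr0]
    · -- upper bound
      by_contra hcon
      push_neg at hcon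
      have hgt : 2 * (N:ℝ) + 1 < r * (c + s) := by
        rw [div_lt_iff₀ hcs0] at hcon
        linarith
      set t : ℝ := (2 * (N:ℝ) + 1) / (r * (c + s)) with htdef
      have hrcs : 0 < r * (c + s) := by positivity
      have ht0 : 0 < t := by positivity
      have ht1 : t < 1 := by
        rw [div_lt_one hrcs]; linarith
      set z : ℂ := ((t/2 : ℝ) : ℂ) - ((t/2 : ℝ) : ℂ) * Complex.I with hzdef
      have hzre : z.re = t/2 := by simp [hzdef]
      have hzim : z.im = -(t/2) := by simp [hzdef]
      have hzX : z ∈ cX := by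
        constructor
        · rw [hzre]; constructor <;> simp <;> linarith
        · rw [hzim]; constructor <;> simp <;> linarith
      have hxval : (ξ * z).re = (N:ℝ) + 1/2 := by
        rw [hre z, hzre, hzim, htdef]
        field_simp
        ring
      have hmem : cdg ξ z ∈ cD ξ := ⟨z, hzX, rfl⟩
      rw [hsq] at hmem
      obtain ⟨a, b, hab, haN, hbN⟩ := hmem
      have hab' : ((⌊(ξ * z).re + 1 / 2⌋ : ℤ) : ℂ) + ((⌊(ξ * z).im + 1 / 2⌋ : ℤ) : ℂ) * Complex.I
          = (a:ℂ) + (b:ℂ) * Complex.I := by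
        rw [← cdg]; exact hab
      obtain ⟨ha, hb⟩ := digit_eq hab'
      rw [hxval] at ha
      have : ((N:ℝ) + 1/2 + 1/2 : ℝ) = ((N:ℤ) + 1 : ℤ) := by push_cast; ring
      rw [this, Int.floor_intCast] at ha
      rw [abs_le] at haN
      omega
  · rintro ⟨h1, h2⟩
    have h2' : r * (c + s) ≤ 2 * (N:ℝ) + 1 := by
      rw [le_div_iff₀ hcs0] at h2; linarith
    rw [squareDS]
    ext w
    simp only [cD, Set.mem_image, Set.mem_setOf_eq]
    constructor
    · rintro ⟨z, ⟨⟨hu1, hu2⟩, hv1, hv2⟩, rfl⟩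
      refine ⟨⌊(ξ * z).re + 1 / 2⌋, ⌊(ξ * z).im + 1 / 2⌋, rfl, ?_, ?_⟩
      · rw [abs_le]
        constructor
        · rw [Int.le_floor]
          push_cast
          rw [hre z]
          nlinarith [mul_le_mul_of_nonneg_left hu1 (mul_nonneg hr0.le hc.le),
            mul_le_mul_of_nonneg_left hv2.le (mul_nonneg hr0.le hs)]
        · have : ⌊(ξ * z).re + 1 / 2⌋ < (N:ℤ) + 1 := by
            rw [Int.floor_lt]
            push_cast
            rw [hre z]
            nlinarith [mul_lt_mul_of_pos_left hu2 (mul_pos hr0 hc),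
              mul_le_mul_of_nonneg_left hv1 (mul_nonneg hr0.le hs)]
          omega
      · rw [abs_le]
        constructor
        · rw [Int.le_floor]
          push_cast
          rw [him z]
          nlinarith [mul_le_mul_of_nonneg_left hu1 (mul_nonneg hr0.le hs),
            mul_le_mul_of_nonneg_left hv1 (mul_nonneg hr0.le hc.le)]
        · have : ⌊(ξ * z).im + 1 / 2⌋ < (N:ℤ) + 1 := by
            rw [Int.floor_lt]
            push_cast
            rw [him z]
            nlinarith [mul_lt_mul_of_pos_left hv2 (mul_pos hr0 hc),
              mul_le_mul_of_nonneg_left hu2.le (mul_nonneg hr0.le hs)]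
          omega
    · rintro ⟨a, b, rfl, ha, hb⟩
      -- construct a preimage point
      set M : ℝ := ((N:ℝ) - 1/2 + min (r / (2 * (c + s))) ((N:ℝ) + 1/2)) / 2 with hMdef
      have hd1 : (N:ℝ) - 1/2 < r / (2 * (c + s)) := by
        rw [lt_div_iff₀ (by positivity)]
        nlinarith
      have hM1 : (N:ℝ) - 1/2 < M := by
        have := lt_min hd1 (by linarith : (N:ℝ) - 1/2 < (N:ℝ) + 1/2)
        rw [hMdef]; linarith
      have hM2 : M < r / (2 * (c + s)) := by
        have := min_le_left (r / (2 * (c + s))) ((N:ℝ) + 1/2)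
        rw [hMdef]; linarith
      have hM3 : M < (N:ℝ) + 1/2 := by
        have := min_le_right (r / (2 * (c + s))) ((N:ℝ) + 1/2)
        rw [hMdef]; linarith
      have hM4 : M * (2 * (c + s)) < r := by
        rw [← lt_div_iff₀ (by positivity)]; exact hM2
      have hkey : ∀ a : ℤ, |a| ≤ (N:ℤ) →
          ∃ x : ℝ, ((a:ℝ) ≤ x + 1/2 ∧ x + 1/2 < (a:ℝ) + 1) ∧ |x| ≤ M := by
        intro a haN
        rw [abs_le] at haN
        by_cases hcase : a = -(N:ℤ)
        · refine ⟨-M, ⟨?_, ?_⟩, by rw [abs_neg, abs_of_nonneg (by linarith)]⟩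
          · rw [hcase]; push_cast; linarith
          · rw [hcase]; push_cast; linarith
        · have ha' : -(N:ℤ) + 1 ≤ a := by omega
          have ha'' : (-(N:ℝ) + 1) ≤ (a:ℝ) := by exact_mod_cast ha'
          have haN' : (a:ℝ) ≤ (N:ℝ) := by exact_mod_cast haN.2
          refine ⟨min (a:ℝ) ((N:ℝ) - 1/2), ⟨?_, ?_⟩, ?_⟩
          · rcases le_or_gt (a:ℝ) ((N:ℝ) - 1/2) with h | h
            · rw [min_eq_left h]; linarith
            · rw [min_eq_right h.le]; linarith
          · have : min (a:ℝ) ((N:ℝ) - 1/2) ≤ (a:ℝ) := min_le_left _ _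
            linarith
          · rw [abs_le]
            constructor
            · have h1' : -((N:ℝ) - 1/2) ≤ (a:ℝ) := by linarith
              have h2'' : -((N:ℝ) - 1/2) ≤ (N:ℝ) - 1/2 := by linarith
              have := le_min h1' h2''
              linarith
            · have := min_le_right (a:ℝ) ((N:ℝ) - 1/2)
              linarith
      obtain ⟨x, ⟨hax1, hax2⟩, hxM⟩ := hkey a ha
      obtain ⟨y, ⟨hby1, hby2⟩, hyM⟩ := hkey b hb
      obtain ⟨hxM1, hxM2⟩ := abs_le.mp hxM
      obtain ⟨hyM1, hyM2⟩ := abs_le.mp hyM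
      have hM0 : 0 ≤ M := by nlinarith
      set z : ℂ := (((x * c + y * s) / r : ℝ) : ℂ) + (((y * c - x * s) / r : ℝ) : ℂ) * Complex.I
        with hzdef
      have hzre : z.re = (x * c + y * s) / r := by simp [hzdef]
      have hzim : z.im = (y * c - x * s) / r := by simp [hzdef]
      have hxz : ξ * z = (x : ℂ) + (y : ℂ) * Complex.I := by
        apply Complex.ext
        · rw [hre, hzre, hzim]
          have : ((x:ℂ) + (y:ℂ) * Complex.I).re = x := by simp
          rw [this]
          field_simp
          linear_combination x * hsc
        · rw [him, hzre, hzim]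
          have : ((x:ℂ) + (y:ℂ) * Complex.I).im = y := by simp
          rw [this]
          field_simp
          linear_combination y * hsc
      refine ⟨z, ⟨?_, ?_⟩, ?_⟩
      · rw [hzre]
        refine ⟨?_, ?_⟩
        · rw [le_div_iff₀ hr0]
          nlinarith [mul_le_mul_of_nonneg_right hxM1 hc.le, mul_le_mul_of_nonneg_right hyM1 hs]
        · rw [div_lt_iff₀ hr0]
          nlinarith [mul_le_mul_of_nonneg_right hxM2 hc.le, mul_le_mul_of_nonneg_right hyM2 hs]
      · rw [hzim]
        refine ⟨?_, ?_⟩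
        · rw [le_div_iff₀ hr0]
          nlinarith [mul_le_mul_of_nonneg_right hyM1 hc.le, mul_le_mul_of_nonneg_right hxM2 hs]
        · rw [div_lt_iff₀ hr0]
          nlinarith [mul_le_mul_of_nonneg_right hyM2 hc.le, mul_le_mul_of_nonneg_right hxM1 hs]
      · have hfa : ⌊x + 1 / 2⌋ = a := by
          rw [Int.floor_eq_iff]
          refine ⟨hax1, by push_cast; linarith⟩
        have hfb : ⌊y + 1 / 2⌋ = b := by
          rw [Int.floor_eq_iff]
          refine ⟨hby1, by push_cast; linarith⟩
        have e1 : ((x:ℂ) + (y:ℂ) * Complex.I).re = x := by simp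
        have e2 : ((x:ℂ) + (y:ℂ) * Complex.I).im = y := by simp
        rw [cdg, hxz, e1, e2, hfa, hfb]
end

section
/- Let θ ∈ (0,π/4] and K(θ) := ⌈(sc+1)/(2sc)⌉ − 1. Then for r > 1, ξ = re^{iθ} has a square digit set (of some size N ≥ 1) if and only if r ∈ ⋃_{N=1}^{K(θ)} ((2N−1)(c+s), (2N+1)/(c+s)]. -/
lemma floor_eq_digit (u : ℝ) (a : ℤ) (h1 : (a : ℝ) - 1/2 ≤ u) (h2 : u < a + 1/2) :
    ⌊u + 1/2⌋ = a := by
  rw [Int.floor_eq_iff]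
  constructor <;> push_cast <;> linarith

lemma int_pair_eq {m n a b : ℤ}
    (h : (m : ℂ) + (n : ℂ) * Complex.I = (a : ℂ) + (b : ℂ) * Complex.I) :
    m = a ∧ n = b := by
  have hre := congrArg Complex.re h
  have him := congrArg Complex.im h
  simp at hre him
  exact ⟨by exact_mod_cast hre, by exact_mod_cast him⟩

lemma floor_bound_re {r c s x y : ℝ} (hr0 : 0 < r) (hc : 0 < c) (hs : 0 < s) (N : ℕ)
    (hupr : r * (c + s) ≤ 2 * N + 1) (hx1 : -(1/2) ≤ x) (hx2 : x < 1/2)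
    (hy1 : -(1/2) ≤ y) (hy2 : y < 1/2) :
    |⌊r * (c * x - s * y) + 1/2⌋| ≤ (N : ℤ) := by
  have hrc : 0 < r * c := by positivity
  have hrs : 0 < r * s := by positivity
  rw [abs_le]
  constructor
  · rw [Int.le_floor]
    push_cast
    nlinarith [mul_le_mul_of_nonneg_left hx1 hrc.le, mul_lt_mul_of_pos_left hy2 hrs]
  · rw [Int.floor_le_iff]
    push_cast
    nlinarith [mul_lt_mul_of_pos_left hx2 hrc, mul_le_mul_of_nonneg_left hy1 hrs.le]

lemma floor_bound_im {r c s x y : ℝ} (hr0 : 0 < r) (hc : 0 < c) (hs : 0 < s) (N : ℕ)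
    (hupr : r * (c + s) ≤ 2 * N + 1) (hx1 : -(1/2) ≤ x) (hx2 : x < 1/2)
    (hy1 : -(1/2) ≤ y) (hy2 : y < 1/2) :
    |⌊r * (s * x + c * y) + 1/2⌋| ≤ (N : ℤ) := by
  have hrc : 0 < r * c := by positivity
  have hrs : 0 < r * s := by positivity
  rw [abs_le]
  constructor
  · rw [Int.le_floor]
    push_cast
    nlinarith [mul_le_mul_of_nonneg_left hx1 hrs.le, mul_le_mul_of_nonneg_left hy1 hrc.le]
  · rw [Int.floor_le_iff]
    push_cast
    nlinarith [mul_lt_mul_of_pos_left hx2 hrs, mul_lt_mul_of_pos_left hy2 hrc]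

/-- Shift of the digit `a` into the half-open box, staying `η` away from the bad corner. -/
noncomputable def dshift (η : ℝ) (a : ℤ) : ℝ :=
  if 1 ≤ a then (a : ℝ) - 1/2 else if a ≤ -1 then (a : ℝ) + 1/2 - η else 0

lemma dshift_mem {η : ℝ} (hη0 : 0 < η) (hη1 : η ≤ 1) (a : ℤ) :
    (a : ℝ) - 1/2 ≤ dshift η a ∧ dshift η a < (a : ℝ) + 1/2 := by
  unfold dshift
  split_ifs with h1 h2
  · constructor <;> linarith
  · constructor <;> linarith
  · have ha : a = 0 := by omega
    subst ha
    norm_num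

lemma dshift_abs {η : ℝ} (hη0 : 0 < η) {N : ℕ} (hN : 1 ≤ N) {a : ℤ} (ha : |a| ≤ (N : ℤ)) :
    |dshift η a| ≤ (N : ℝ) - 1/2 + η := by
  rw [abs_le] at ha ⊢
  have haN : ((a : ℝ)) ≤ (N : ℝ) := by exact_mod_cast ha.2
  have haN' : (-(N : ℤ) : ℝ) ≤ (a : ℝ) := by exact_mod_cast ha.1
  push_cast at haN'
  have hN' : (1 : ℝ) ≤ (N : ℝ) := by exact_mod_cast hN
  unfold dshift
  split_ifs with h1 h2
  · have : (1 : ℝ) ≤ (a : ℝ) := by exact_mod_cast h1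
    constructor <;> linarith
  · have : (a : ℝ) ≤ -1 := by exact_mod_cast h2
    constructor <;> linarith
  · constructor <;> linarith

/-- Existence of a preimage point for each digit in the square. -/
lemma exists_uv {r c s : ℝ} (hr0 : 0 < r) (hc : 0 < c) (hs : 0 < s) {N : ℕ} (hN : 1 ≤ N)
    (hlow : (2 * (N : ℝ) - 1) * (c + s) < r) {a b : ℤ}
    (haN : |a| ≤ (N : ℤ)) (hbN : |b| ≤ (N : ℤ)) :
    ∃ u v : ℝ, ((a : ℝ) - 1/2 ≤ u ∧ u < (a : ℝ) + 1/2) ∧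
      ((b : ℝ) - 1/2 ≤ v ∧ v < (b : ℝ) + 1/2) ∧
      |u * c + v * s| < r/2 ∧ |v * c - u * s| < r/2 := by
  have hcs0 : 0 < c + s := by linarith
  have hη₀ : 0 < r / (2 * (c + s)) - ((N : ℝ) - 1/2) := by
    rw [sub_pos, lt_div_iff₀ (by positivity)]
    nlinarith
  set η := min (1/2 : ℝ) ((r / (2 * (c + s)) - ((N : ℝ) - 1/2)) / 2) with hη_def
  have hη0 : 0 < η := lt_min (by norm_num) (by linarith)
  have hη1 : η ≤ 1 := le_trans (min_le_left _ _) (by norm_num)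
  have hηM : ((N : ℝ) - 1/2 + η) * (c + s) < r / 2 := by
    have h1 : η ≤ (r / (2 * (c + s)) - ((N : ℝ) - 1/2)) / 2 := min_le_right _ _
    have h2 : (N : ℝ) - 1/2 + η < r / (2 * (c + s)) := by linarith
    calc ((N : ℝ) - 1/2 + η) * (c + s) < (r / (2 * (c + s))) * (c + s) :=
          mul_lt_mul_of_pos_right h2 hcs0
      _ = r / 2 := by field_simp
  refine ⟨dshift η a, dshift η b, dshift_mem hη0 hη1 a, dshift_mem hη0 hη1 b, ?_, ?_⟩
  · obtain ⟨hu1, hu2⟩ := abs_le.mp (dshift_abs hη0 hN haN)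
    obtain ⟨hv1, hv2⟩ := abs_le.mp (dshift_abs hη0 hN hbN)
    rw [abs_lt]
    constructor <;> nlinarith
  · obtain ⟨hu1, hu2⟩ := abs_le.mp (dshift_abs hη0 hN haN)
    obtain ⟨hv1, hv2⟩ := abs_le.mp (dshift_abs hη0 hN hbN)
    rw [abs_lt]
    constructor <;> nlinarith

/-- Inverting the multiplication by `ξ = r(c+si)`. -/
lemma mul_formula {r c s : ℝ} (hr0 : 0 < r) (hsq : s^2 + c^2 = 1) (u v : ℝ) :
    ((r : ℂ) * ((c : ℝ) + (s : ℝ) * Complex.I)) *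
      ((((u * c + v * s) / r : ℝ) : ℂ) + (((v * c - u * s) / r : ℝ) : ℂ) * Complex.I)
    = ((u : ℝ) : ℂ) + ((v : ℝ) : ℂ) * Complex.I := by
  have hr0' : (r : ℝ) ≠ 0 := ne_of_gt hr0
  rw [Complex.ext_iff]
  constructor
  · simp only [Complex.add_re, Complex.add_im, Complex.mul_re, Complex.mul_im,
      Complex.ofReal_re, Complex.ofReal_im, Complex.I_re, Complex.I_im]
    field_simp
    ring_nf
    linear_combination r * u * hsq
  · simp only [Complex.add_re, Complex.add_im, Complex.mul_re, Complex.mul_im,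
      Complex.ofReal_re, Complex.ofReal_im, Complex.I_re, Complex.I_im]
    field_simp
    ring_nf
    linear_combination r * v * hsq


lemma squareDS_mp {r c s : ℝ} {ξ : ℂ} (hr0 : 0 < r) (hc : 0 < c) (hs : 0 < s)
    (hsq : s^2 + c^2 = 1)
    (hre : ∀ z : ℂ, (ξ * z).re = r * (c * z.re - s * z.im))
    (him : ∀ z : ℂ, (ξ * z).im = r * (s * z.re + c * z.im))
    (N : ℕ) (hN : 1 ≤ N) (hSq : squareDS ξ N) :
    r ∈ Set.Ioc ((2 * (N : ℝ) - 1) * (c + s)) ((2 * (N : ℝ) + 1) / (c + s)) := by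
  have hcs0 : 0 < c + s := by linarith
  have hNN : ((N : ℤ) : ℂ) + ((N : ℤ) : ℂ) * Complex.I ∈ cD ξ := by
    rw [hSq]
    exact ⟨N, N, rfl, by simp, by simp⟩
  obtain ⟨z, hz, hdz⟩ := hNN
  rw [cdg] at hdz
  obtain ⟨ha, hb⟩ := int_pair_eq hdz
  have h1 : (N : ℝ) - 1/2 ≤ (ξ * z).re := by
    have := Int.floor_le ((ξ * z).re + 1/2)
    rw [ha] at this
    push_cast at this
    linarith
  have h2 : (N : ℝ) - 1/2 ≤ (ξ * z).im := by
    have := Int.floor_le ((ξ * z).im + 1/2)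
    rw [hb] at this
    push_cast at this
    linarith
  rw [hre z] at h1
  rw [him z] at h2
  have e : c * (r * (c * z.re - s * z.im)) + s * (r * (s * z.re + c * z.im)) = r * z.re := by
    linear_combination (r * z.re) * hsq
  have hcomb : ((N : ℝ) - 1/2) * (c + s) ≤ r * z.re := by
    nlinarith [mul_le_mul_of_nonneg_left h1 hc.le, mul_le_mul_of_nonneg_left h2 hs.le, e]
  have hzre : z.re < 1/2 := hz.1.2
  have hlow : (2 * (N : ℝ) - 1) * (c + s) < r := by
    have : r * z.re < r * (1/2) := mul_lt_mul_of_pos_left hzre hr0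
    nlinarith
  have hup : r ≤ (2 * (N : ℝ) + 1) / (c + s) := by
    rw [le_div_iff₀ hcs0]
    by_contra hcon
    push_neg at hcon
    set ε := min 1 ((r * (c + s) - (2 * (N : ℝ) + 1)) / (2 * r * c)) with hε_def
    have hε0 : 0 < ε :=
      lt_min one_pos (div_pos (by linarith) (by positivity))
    have hε1 : ε ≤ 1 := min_le_left _ _
    set z₀ : ℂ := ((1/2 - ε : ℝ) : ℂ) + ((-(1/2) : ℝ) : ℂ) * Complex.I with hz0_def
    have hz0re : z₀.re = 1/2 - ε := by simp [hz0_def]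
    have hz0im : z₀.im = -(1/2) := by simp [hz0_def]
    have hz0 : z₀ ∈ cX := by
      refine ⟨⟨?_, ?_⟩, ⟨?_, ?_⟩⟩
      · rw [hz0re]; linarith
      · rw [hz0re]; linarith
      · rw [hz0im]
      · rw [hz0im]; norm_num
    have hmem : cdg ξ z₀ ∈ cD ξ := Set.mem_image_of_mem _ hz0
    rw [hSq] at hmem
    obtain ⟨a, b, hab, haN, hbN⟩ := hmem
    rw [cdg] at hab
    obtain ⟨ha', hb'⟩ := int_pair_eq hab
    have hfloor : ((⌊(ξ * z₀).re + 1/2⌋ : ℤ) : ℝ) ≤ (N : ℝ) := by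
      rw [ha']
      exact_mod_cast (abs_le.mp haN).2
    have hlt : (ξ * z₀).re + 1/2 < (N : ℝ) + 1 := by
      have := Int.lt_floor_add_one ((ξ * z₀).re + 1/2)
      linarith
    have hρ : (ξ * z₀).re = r * (c * (1/2 - ε) + s * (1/2)) := by
      rw [hre z₀, hz0re, hz0im]
      ring
    have hεle : ε ≤ (r * (c + s) - (2 * (N : ℝ) + 1)) / (2 * r * c) := min_le_right _ _
    have hkey : r * c * ε ≤ (r * (c + s) - (2 * (N : ℝ) + 1)) / 2 := by
      rw [le_div_iff₀ (by positivity : (0:ℝ) < 2 * r * c)] at hεle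
      linarith
    rw [hρ] at hlt
    nlinarith
  exact ⟨hlow, hup⟩

lemma squareDS_mpr {r c s : ℝ} {ξ : ℂ} (hr0 : 0 < r) (hc : 0 < c) (hs : 0 < s)
    (hsq : s^2 + c^2 = 1)
    (hξ' : ξ = (r : ℂ) * ((c : ℝ) + (s : ℝ) * Complex.I))
    (hre : ∀ z : ℂ, (ξ * z).re = r * (c * z.re - s * z.im))
    (him : ∀ z : ℂ, (ξ * z).im = r * (s * z.re + c * z.im))
    (N : ℕ) (hN : 1 ≤ N)
    (hmem : r ∈ Set.Ioc ((2 * (N : ℝ) - 1) * (c + s)) ((2 * (N : ℝ) + 1) / (c + s))) :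
    squareDS ξ N := by
  have hcs0 : 0 < c + s := by linarith
  obtain ⟨hlow, hup⟩ := hmem
  have hupr : r * (c + s) ≤ 2 * (N : ℝ) + 1 := by
    rw [le_div_iff₀ hcs0] at hup
    linarith
  ext w
  constructor
  · rintro ⟨z, hz, rfl⟩
    obtain ⟨⟨hx1, hx2⟩, hy1, hy2⟩ := hz
    refine ⟨⌊(ξ * z).re + 1/2⌋, ⌊(ξ * z).im + 1/2⌋, rfl, ?_, ?_⟩
    · rw [hre z]
      exact floor_bound_re hr0 hc hs N hupr hx1 hx2 hy1 hy2
    · rw [him z]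
      exact floor_bound_im hr0 hc hs N hupr hx1 hx2 hy1 hy2
  · rintro ⟨a, b, rfl, haN, hbN⟩
    obtain ⟨u, v, ⟨hu1, hu2⟩, ⟨hv1, hv2⟩, habs1, habs2⟩ :=
      exists_uv hr0 hc hs hN hlow haN hbN
    refine ⟨(((u * c + v * s) / r : ℝ) : ℂ) + (((v * c - u * s) / r : ℝ) : ℂ) * Complex.I,
      ?_, ?_⟩
    · obtain ⟨h1l, h1r⟩ := abs_lt.mp habs1
      obtain ⟨h2l, h2r⟩ := abs_lt.mp habs2
      constructor
      · simp only [Complex.add_re, Complex.mul_re, Complex.ofReal_re, Complex.ofReal_im,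
          Complex.I_re, Complex.I_im, Set.mem_Ico]
        norm_num
        constructor
        · rw [le_div_iff₀ hr0]; nlinarith
        · rw [div_lt_iff₀ hr0]; nlinarith
      · simp only [Complex.add_im, Complex.mul_im, Complex.ofReal_re, Complex.ofReal_im,
          Complex.I_re, Complex.I_im, Set.mem_Ico]
        norm_num
        constructor
        · rw [le_div_iff₀ hr0]; nlinarith
        · rw [div_lt_iff₀ hr0]; nlinarith
    · have hmul : ξ * ((((u * c + v * s) / r : ℝ) : ℂ) +
          (((v * c - u * s) / r : ℝ) : ℂ) * Complex.I)
          = ((u : ℝ) : ℂ) + ((v : ℝ) : ℂ) * Complex.I := by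
        rw [hξ']
        exact mul_formula hr0 hsq u v
      rw [cdg, hmul]
      have e1 : ⌊(((u : ℝ) : ℂ) + ((v : ℝ) : ℂ) * Complex.I).re + 1/2⌋ = a := by
        simp only [Complex.add_re, Complex.mul_re, Complex.ofReal_re, Complex.ofReal_im,
          Complex.I_re, Complex.I_im]
        norm_num
        exact floor_eq_digit u a hu1 hu2
      have e2 : ⌊(((u : ℝ) : ℂ) + ((v : ℝ) : ℂ) * Complex.I).im + 1/2⌋ = b := by
        simp only [Complex.add_im, Complex.mul_im, Complex.ofReal_re, Complex.ofReal_im,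
          Complex.I_re, Complex.I_im]
        norm_num
        exact floor_eq_digit v b hv1 hv2
      rw [e1, e2]

/-- For `θ ∈ (0, π/4]` and `K(θ) = ⌈(sc+1)/(2sc)⌉ − 1`: `ξ = r e^{iθ}` has a square
digit set (of some size `N ≥ 1`) iff `r ∈ ⋃_{N=1}^{K(θ)} ((2N−1)(c+s), (2N+1)/(c+s)]`. -/
theorem stmt10 (r θ : ℝ) (hr : 1 < r) (hθ : θ ∈ Set.Ioc 0 (Real.pi / 4))
    (ξ : ℂ) (hξ : ξ = (r : ℂ) * Complex.exp (θ * Complex.I)) :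
    (∃ N : ℕ, 1 ≤ N ∧ squareDS ξ N) ↔
      (∃ N : ℕ, 1 ≤ N ∧
        (N : ℤ) ≤ ⌈(Real.sin θ * Real.cos θ + 1) / (2 * Real.sin θ * Real.cos θ)⌉ - 1 ∧
        r ∈ Set.Ioc ((2 * (N : ℝ) - 1) * (Real.cos θ + Real.sin θ))
          ((2 * (N : ℝ) + 1) / (Real.cos θ + Real.sin θ))) := by
  obtain ⟨hθ0, hθ4⟩ := hθ
  have hπ := Real.pi_pos
  set s := Real.sin θ with hs_def
  set c := Real.cos θ with hc_def
  have hs : 0 < s := Real.sin_pos_of_pos_of_lt_pi hθ0 (by linarith)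
  have hc : 0 < c := Real.cos_pos_of_mem_Ioo ⟨by linarith, by linarith⟩
  have hsc : s ≤ c := by
    have := Real.sin_le_sin_of_le_of_le_pi_div_two (x := θ) (y := Real.pi/2 - θ)
      (by linarith) (by linarith) (by linarith)
    rwa [Real.sin_pi_div_two_sub] at this
  have hcs0 : 0 < c + s := by linarith
  have hsq : s^2 + c^2 = 1 := Real.sin_sq_add_cos_sq θ
  have hr0 : 0 < r := by linarith
  have hξ' : ξ = (r : ℂ) * ((c : ℝ) + (s : ℝ) * Complex.I) := by
    rw [hξ, Complex.exp_mul_I]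
    norm_cast
  have hre : ∀ z : ℂ, (ξ * z).re = r * (c * z.re - s * z.im) := by
    intro z
    rw [hξ']
    simp [Complex.mul_re, Complex.mul_im]
    ring
  have him : ∀ z : ℂ, (ξ * z).im = r * (s * z.re + c * z.im) := by
    intro z
    rw [hξ']
    simp [Complex.mul_re, Complex.mul_im]
    ring
  have key : ∀ N : ℕ, 1 ≤ N → (squareDS ξ N ↔
      r ∈ Set.Ioc ((2 * (N : ℝ) - 1) * (c + s)) ((2 * (N : ℝ) + 1) / (c + s))) :=
    fun N hN => ⟨squareDS_mp hr0 hc hs hsq hre him N hN,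
      squareDS_mpr hr0 hc hs hsq hξ' hre him N hN⟩
  constructor
  · rintro ⟨N, hN, hSq⟩
    have hmem := (key N hN).mp hSq
    refine ⟨N, hN, ?_, hmem⟩
    have h2 : r * (c + s) ≤ 2 * (N : ℝ) + 1 := by
      have := hmem.2
      rw [le_div_iff₀ hcs0] at this
      linarith
    have h1 := hmem.1
    have hx : ((N : ℤ) : ℝ) < (s * c + 1) / (2 * s * c) := by
      rw [lt_div_iff₀ (by positivity)]
      push_cast
      nlinarith [mul_lt_mul_of_pos_right h1 hcs0, hsq]
    have := Int.lt_ceil.mpr hx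
    omega
  · rintro ⟨N, hN, -, hmem⟩
    exact ⟨N, hN, (key N hN).mpr hmem⟩
end

section
/- Let ξ = re^{iθ} with r > 1 and θ ∈ [0,π/4]. Then property (C_1), i.e. ξ^{−1}𝒳 ⊆ 𝒳, holds if and only if r ≥ cos θ + sin θ. In particular, (C_1) holds whenever ξ has a square digit set (of some size N ≥ 1), and (C_1) holds whenever r ≥ √2. -/
/-- A block `a_0 ⋯ a_{m-1}` is admissible if it occurs as a block of consecutive
digits of the expansion of some `z ∈ 𝒳`. -/
noncomputable def cAdm (ξ : ℂ) (m : ℕ) (a : ℕ → ℂ) : Prop :=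
  ∃ z ∈ cX, ∃ m₀ : ℕ, ∀ j < m, a j = cdig ξ (m₀ + j) z

/-- Property `(C_n)`: `ξ^{-n} 𝒳 + ξ^{-(n-1)} a_{n-1} + ⋯ + ξ^{-1} a_1 ⊆ 𝒳` for every
admissible block `a_1 ⋯ a_{n-1}` (for `n = 1` this reads `ξ^{-1} 𝒳 ⊆ 𝒳`). -/
noncomputable def propC (ξ : ℂ) (n : ℕ) : Prop :=
  ∀ a : ℕ → ℂ, cAdm ξ (n - 1) a →
    ∀ x ∈ cX,
      ξ ^ (-(n : ℤ)) * x + ∑ j ∈ Finset.range (n - 1), ξ ^ (-((j : ℤ) + 1)) * a j ∈ cX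

/-- `f_N^{(k)}(r) = r^k − 2N Σ_{j=1}^{k−1} r^{k−j}(|cos jθ| + |sin jθ|) − (|cos kθ| + |sin kθ|)`;
its unique positive root is `v_N^{(k)}(θ)`. -/
noncomputable def fNk (θ : ℝ) (N k : ℕ) (r : ℝ) : ℝ :=
  r ^ k -
    2 * (N : ℝ) * ∑ j ∈ Finset.range (k - 1),
      r ^ (k - 1 - j) * (|Real.cos (((j : ℝ) + 1) * θ)| + |Real.sin (((j : ℝ) + 1) * θ)|) -
    (|Real.cos ((k : ℝ) * θ)| + |Real.sin ((k : ℝ) * θ)|)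

open Complex Real

lemma zero_mem_cX : (0 : ℂ) ∈ cX := by
  constructor <;> constructor <;> norm_num

lemma propC_one_iff (ξ : ℂ) : propC ξ 1 ↔ ∀ x ∈ cX, ξ⁻¹ * x ∈ cX := by
  have hadm (a : ℕ → ℂ) : cAdm ξ 0 a := ⟨0, zero_mem_cX, 0, fun _ h => absurd h (Nat.not_lt_zero _)⟩
  simp only [propC, Nat.sub_self, Finset.range_zero, Finset.sum_empty, add_zero, Nat.cast_one,
    zpow_neg_one]
  exact ⟨fun h => h 0 (hadm 0), fun h _ _ => h⟩

lemma polar_inv_mul_re {r : ℝ} (hr : r ≠ 0) (θ : ℝ) (x : ℂ) :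
    (((r : ℂ) * exp (θ * I))⁻¹ * x).re = (Real.cos θ * x.re + Real.sin θ * x.im) / r := by
  rw [mul_inv, ← Complex.exp_neg, ← neg_mul, ← ofReal_neg, ← ofReal_inv, mul_assoc, re_ofReal_mul,
    mul_re, exp_ofReal_mul_I_re, exp_ofReal_mul_I_im, Real.cos_neg, Real.sin_neg]
  field_simp
  ring

lemma polar_inv_mul_im {r : ℝ} (hr : r ≠ 0) (θ : ℝ) (x : ℂ) :
    (((r : ℂ) * exp (θ * I))⁻¹ * x).im = (Real.cos θ * x.im - Real.sin θ * x.re) / r := by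
  rw [mul_inv, ← Complex.exp_neg, ← neg_mul, ← ofReal_neg, ← ofReal_inv, mul_assoc, im_ofReal_mul,
    mul_im, exp_ofReal_mul_I_re, exp_ofReal_mul_I_im, Real.cos_neg, Real.sin_neg]
  field_simp
  ring

section Polar

variable {r θ : ℝ}

lemma polar_inv_mul_mem_cX (hr : 0 < r) (hc : 0 < Real.cos θ) (hs : 0 ≤ Real.sin θ)
    (h : Real.cos θ + Real.sin θ ≤ r) {x : ℂ} (hx : x ∈ cX) :
    ((r : ℂ) * exp (θ * I))⁻¹ * x ∈ cX := by
  obtain ⟨⟨ha₁, ha₂⟩, hb₁, hb₂⟩ := hx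
  refine ⟨⟨?_, ?_⟩, ?_, ?_⟩ <;>
    simp only [polar_inv_mul_re hr.ne', polar_inv_mul_im hr.ne', le_div_iff₀ hr, div_lt_iff₀ hr]
  · nlinarith
  · nlinarith
  · nlinarith
  · nlinarith

lemma le_of_polar_inv_mul_mem_cX (hr : 0 < r)
    (h : ∀ x ∈ cX, ((r : ℂ) * exp (θ * I))⁻¹ * x ∈ cX) :
    Real.cos θ + Real.sin θ ≤ r := by
  by_contra! hlt
  have hpos : 0 < Real.cos θ + Real.sin θ := hr.trans hlt
  set t := r / (2 * (Real.cos θ + Real.sin θ))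
  have ht : 0 < t ∧ t < 1 / 2 := ⟨by positivity, by rw [div_lt_iff₀ (by positivity)]; linarith⟩
  obtain ⟨hre, him⟩ : ((t : ℂ) + t * I).re = t ∧ ((t : ℂ) + t * I).im = t := by simp
  have hmem := (h _ ⟨⟨by rw [hre]; linarith, by rw [hre]; linarith⟩,
    by rw [him]; linarith, by rw [him]; linarith⟩).1.2
  rw [polar_inv_mul_re hr.ne', hre, him, div_lt_iff₀ hr] at hmem
  have : (Real.cos θ + Real.sin θ) * t = r / 2 := by
    simp only [t]
    field_simp
  linarith

lemma polar_inv_mul_cX_subset_iff (hr : 0 < r) (hc : 0 < Real.cos θ) (hs : 0 ≤ Real.sin θ) :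
    (∀ x ∈ cX, ((r : ℂ) * exp (θ * I))⁻¹ * x ∈ cX) ↔ Real.cos θ + Real.sin θ ≤ r :=
  ⟨le_of_polar_inv_mul_mem_cX hr, fun h _ => polar_inv_mul_mem_cX hr hc hs h⟩

lemma cos_add_sin_lt_of_mul_mem_cX (hr : 0 < r) (hc : 0 ≤ Real.cos θ) (hs : 0 ≤ Real.sin θ)
    {z : ℂ} (hz : z ∈ cX) (hre : 1 / 2 ≤ ((r : ℂ) * exp (θ * I) * z).re)
    (him : 1 / 2 ≤ ((r : ℂ) * exp (θ * I) * z).im) :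
    Real.cos θ + Real.sin θ < r := by
  have hcancel : ((r : ℂ) * exp (θ * I))⁻¹ * ((r : ℂ) * exp (θ * I) * z) = z := by
    rw [inv_mul_cancel_left₀ (mul_ne_zero (ofReal_ne_zero.2 hr.ne') (exp_ne_zero _))]
  have hlt := hz.1.2
  rw [← hcancel, polar_inv_mul_re hr.ne', div_lt_iff₀ hr] at hlt
  nlinarith

end Polar

lemma exists_half_le_mul_of_squareDS {ξ : ℂ} {N : ℕ} (hN : 1 ≤ N) (h : squareDS ξ N) :
    ∃ z ∈ cX, 1 / 2 ≤ (ξ * z).re ∧ 1 / 2 ≤ (ξ * z).im := by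
  have hmem : (N : ℂ) + N * I ∈ cD ξ := by
    rw [h]
    exact ⟨N, N, by push_cast; rfl, by simp, by simp⟩
  obtain ⟨z, hz, hd⟩ := hmem
  have hre := congrArg re hd
  have him := congrArg im hd
  simp only [cdg, add_re, intCast_re, mul_re, intCast_im, I_re, I_im, mul_zero, mul_one, sub_zero,
    add_zero, natCast_re, natCast_im, add_im, zero_add, mul_im] at hre him
  have key {a : ℝ} (ha : (⌊a + 1 / 2⌋ : ℝ) = N) : 1 / 2 ≤ a := by
    have : (1 : ℝ) ≤ N := Nat.one_le_cast.2 hN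
    linarith [Int.floor_le (a + 1 / 2)]
  exact ⟨z, hz, key hre, key him⟩

lemma cos_add_sin_le_sqrt_two (θ : ℝ) : Real.cos θ + Real.sin θ ≤ √2 :=
  (le_abs_self _).trans <| Real.abs_le_sqrt <| by
    nlinarith [Real.cos_sq_add_sin_sq θ, sq_nonneg (Real.cos θ - Real.sin θ)]

/-- `(C_1)`, i.e. `ξ^{-1}𝒳 ⊆ 𝒳`, holds iff `r ≥ cos θ + sin θ`.  In particular `(C_1)`
holds whenever `ξ` has a square digit set (of some size `N ≥ 1`), and whenever `r ≥ √2`. -/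
theorem stmt12 (r θ : ℝ) (hr : 1 < r) (hθ : θ ∈ Set.Icc 0 (Real.pi / 4))
    (ξ : ℂ) (hξ : ξ = (r : ℂ) * Complex.exp (θ * Complex.I)) :
    (propC ξ 1 ↔ Real.cos θ + Real.sin θ ≤ r) ∧
    ((∃ N : ℕ, 1 ≤ N ∧ squareDS ξ N) → propC ξ 1) ∧
    (Real.sqrt 2 ≤ r → propC ξ 1) := by
  obtain ⟨hθ₀, hθ₄⟩ := hθ
  have hr₀ : 0 < r := by linarith
  have hc : 0 < Real.cos θ := Real.cos_pos_of_mem_Ioo ⟨by linarith [pi_pos], by linarith [pi_pos]⟩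
  have hs : 0 ≤ Real.sin θ := Real.sin_nonneg_of_nonneg_of_le_pi hθ₀ (by linarith [pi_pos])
  have hC : propC ξ 1 ↔ Real.cos θ + Real.sin θ ≤ r := by
    rw [propC_one_iff, hξ]
    exact polar_inv_mul_cX_subset_iff hr₀ hc hs
  refine ⟨hC, ?_, fun h => hC.2 ((cos_add_sin_le_sqrt_two θ).trans h)⟩
  rintro ⟨N, hN, hsq⟩
  obtain ⟨z, hz, hre, him⟩ := exists_half_le_mul_of_squareDS hN hsq
  rw [hξ] at hre him
  exact hC.2 (cos_add_sin_lt_of_mul_mem_cX hr₀ hc.le hs hz hre him).le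
end

section
/- Let θ ∈ [0,π/4], let k ≥ 2 be an integer, let ξ = re^{iθ} with r > 1, and set N := ⌈(r(c+s)+1)/2⌉ − 1. If r > v_N^{(k)}(θ) and property (C_k) holds for the ξ-expansion, then ξ has a square digit set (of size N). -/
/- If `r > 2N(c+s)`, then `ξ^{-1}(a+bi) ∈ 𝒳` for every `a + bi` in the square of size `N`, so
the whole square is attained as digits; if `r(c+s) ≤ 2N+1`, then `ξ𝒳` lies in the square
`[-N-1/2, N+1/2)²`, so no other digit occurs. The first inequality follows from the root `v < r`
of `f_N^{(k)}`, since the `j = 1` term of its sum alone gives `v^k ≥ 2N v^{k-1}(c+s)`; the second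
is the choice of `N`. -/

open Complex

def gaussSquare (N : ℤ) : Set ℂ :=
  {w : ℂ | ∃ a b : ℤ, w = (a : ℂ) + (b : ℂ) * I ∧ |a| ≤ N ∧ |b| ≤ N}

theorem two_mul_mul_le_of_fNk_eq_zero {θ v : ℝ} {N k : ℕ} (hv : 0 < v) (hk : 2 ≤ k)
    (hroot : fNk θ N k v = 0) :
    2 * N * (|Real.cos θ| + |Real.sin θ|) ≤ v := by
  set term : ℕ → ℝ := fun j =>
    v ^ (k - 1 - j) * (|Real.cos (((j : ℝ) + 1) * θ)| + |Real.sin (((j : ℝ) + 1) * θ)|)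
  have hfirst : v ^ (k - 1) * (|Real.cos θ| + |Real.sin θ|) ≤ ∑ j ∈ Finset.range (k - 1), term j := by
    have := Finset.single_le_sum (f := term) (fun j _ => by positivity)
      (Finset.mem_range.2 (by omega : 0 < k - 1))
    simpa [term] using this
  have hpow : v ^ k = v * v ^ (k - 1) := by rw [← pow_succ']; congr 1; omega
  have hlast : 0 ≤ |Real.cos ((k : ℝ) * θ)| + |Real.sin ((k : ℝ) * θ)| := by positivity
  have hpos : 0 < v ^ (k - 1) := pow_pos hv _
  unfold fNk at hroot
  refine le_of_mul_le_mul_right ?_ hpos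
  nlinarith [(by positivity : (0 : ℝ) ≤ N)]

theorem le_two_mul_add_one_of_eq_ceil_sub_one {x : ℝ} {N : ℤ} (hN : N = ⌈(x + 1) / 2⌉ - 1) :
    x ≤ 2 * N + 1 := by
  have h := Int.le_ceil ((x + 1) / 2)
  rw [show ⌈(x + 1) / 2⌉ = N + 1 by omega] at h
  push_cast at h
  linarith

theorem abs_floor_add_half_le {x : ℝ} {N : ℤ} (h₁ : -(N + 1 / 2) ≤ x) (h₂ : x < N + 1 / 2) :
    |⌊x + 1 / 2⌋| ≤ N := by
  rw [abs_le]
  constructor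
  · rw [Int.le_floor]; push_cast; linarith
  · have : ⌊x + 1 / 2⌋ < N + 1 := by rw [Int.floor_lt]; push_cast; linarith
    omega

theorem cdg_eq_of_mul_eq {ξ z : ℂ} {a b : ℤ} (h : ξ * z = a + b * I) : cdg ξ z = a + b * I := by
  norm_num [cdg, h]

theorem mem_cX_of_abs_lt {z : ℂ} (hre : |z.re| < 1 / 2) (him : |z.im| < 1 / 2) : z ∈ cX := by
  rw [abs_lt] at hre him
  exact ⟨⟨hre.1.le, hre.2⟩, ⟨him.1.le, him.2⟩⟩

section Rotation

variable (r θ : ℝ) (z : ℂ)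

theorem re_ofReal_mul_exp_mul :
    ((r : ℂ) * exp (θ * I) * z).re = r * (Real.cos θ * z.re - Real.sin θ * z.im) := by
  simp only [exp_mul_I, mul_re, mul_im, add_re, add_im, ofReal_re, ofReal_im, I_re, I_im,
    ← ofReal_cos, ← ofReal_sin]
  ring

theorem im_ofReal_mul_exp_mul :
    ((r : ℂ) * exp (θ * I) * z).im = r * (Real.sin θ * z.re + Real.cos θ * z.im) := by
  simp only [exp_mul_I, mul_re, mul_im, add_re, add_im, ofReal_re, ofReal_im, I_re, I_im,
    ← ofReal_cos, ← ofReal_sin]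
  ring

theorem inv_ofReal_mul_exp_mul :
    ((r : ℂ) * exp (θ * I))⁻¹ = ((r⁻¹ : ℝ) : ℂ) * exp ((-θ : ℝ) * I) := by
  rw [mul_inv, ← exp_neg, ofReal_inv, ofReal_neg, neg_mul]

end Rotation

section DigitSet

variable {r θ : ℝ} {N : ℕ} (hr : 0 < r) (hc : 0 < Real.cos θ) (hs : 0 ≤ Real.sin θ)
include hr hc hs

theorem cdg_mem_gaussSquare (hN : r * (Real.cos θ + Real.sin θ) ≤ 2 * N + 1) {z : ℂ}
    (hz : z ∈ cX) : cdg ((r : ℂ) * exp (θ * I)) z ∈ gaussSquare N := by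
  obtain ⟨⟨hx₁, hx₂⟩, ⟨hy₁, hy₂⟩⟩ := hz
  have hrc : 0 < r * Real.cos θ := mul_pos hr hc
  have hrs : 0 ≤ r * Real.sin θ := mul_nonneg hr.le hs
  refine ⟨_, _, rfl, abs_floor_add_half_le ?_ ?_, abs_floor_add_half_le ?_ ?_⟩ <;>
    simp only [re_ofReal_mul_exp_mul, im_ofReal_mul_exp_mul] <;> push_cast
  · nlinarith [mul_le_mul_of_nonneg_left hx₁ hrc.le, mul_le_mul_of_nonneg_left hy₂.le hrs]
  · nlinarith [mul_lt_mul_of_pos_left hx₂ hrc, mul_le_mul_of_nonneg_left hy₁ hrs]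
  · nlinarith [mul_le_mul_of_nonneg_left hy₁ hrc.le, mul_le_mul_of_nonneg_left hx₁ hrs]
  · nlinarith [mul_lt_mul_of_pos_left hy₂ hrc, mul_le_mul_of_nonneg_left hx₂.le hrs]

theorem gaussSquare_subset_cD (hN : 2 * N * (Real.cos θ + Real.sin θ) < r) :
    gaussSquare N ⊆ cD ((r : ℂ) * exp (θ * I)) := by
  rintro _ ⟨a, b, rfl, ha, hb⟩
  set ξ := (r : ℂ) * exp (θ * I)
  have hξ : ξ ≠ 0 := mul_ne_zero (ofReal_ne_zero.2 hr.ne') (exp_ne_zero _)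
  refine ⟨ξ⁻¹ * (a + b * I), ?_, cdg_eq_of_mul_eq (mul_inv_cancel_left₀ hξ _)⟩
  have hbound {x y : ℤ} (hx : |x| ≤ N) (hy : |y| ≤ N) :
      |r⁻¹ * (Real.cos θ * x + Real.sin θ * y)| < 1 / 2 := by
    replace hx : |(x : ℝ)| ≤ N := by exact_mod_cast hx
    replace hy : |(y : ℝ)| ≤ N := by exact_mod_cast hy
    rw [abs_mul, abs_inv, abs_of_pos hr, inv_mul_lt_iff₀ hr]
    calc |Real.cos θ * x + Real.sin θ * y|
        ≤ Real.cos θ * |(x : ℝ)| + Real.sin θ * |(y : ℝ)| := by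
          grw [abs_add_le, abs_mul, abs_mul, abs_of_pos hc, abs_of_nonneg hs]
      _ ≤ Real.cos θ * N + Real.sin θ * N := by gcongr
      _ < r * (1 / 2) := by linarith
  apply mem_cX_of_abs_lt
  · convert hbound ha hb using 2
    rw [inv_ofReal_mul_exp_mul, re_ofReal_mul_exp_mul]
    simp only [Real.cos_neg, Real.sin_neg, add_re, add_im, intCast_re, intCast_im, mul_re, mul_im,
      I_re, I_im]
    ring
  · convert hbound hb (abs_neg a ▸ ha) using 2
    rw [inv_ofReal_mul_exp_mul, im_ofReal_mul_exp_mul]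
    simp only [Real.cos_neg, Real.sin_neg, add_re, add_im, intCast_re, intCast_im, mul_re, mul_im,
      I_re, I_im]
    push_cast
    ring

end DigitSet

theorem stmt13_general (r θ : ℝ) (hθ : θ ∈ Set.Icc 0 (Real.pi / 4))
    (ξ : ℂ) (hξ : ξ = (r : ℂ) * Complex.exp (θ * Complex.I))
    (k : ℕ) (hk : 2 ≤ k)
    (N : ℕ) (hNdef : (N : ℤ) = ⌈(r * (Real.cos θ + Real.sin θ) + 1) / 2⌉ - 1)
    (v : ℝ) (hv : 0 < v) (hroot : fNk θ N k v = 0)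
    (hrv : v < r) :
    squareDS ξ N := by
  obtain ⟨hθ₀, hθ₁⟩ := hθ
  have hc : 0 < Real.cos θ :=
    Real.cos_pos_of_mem_Ioo ⟨by linarith [Real.pi_pos], by linarith [Real.pi_pos]⟩
  have hs : 0 ≤ Real.sin θ := Real.sin_nonneg_of_nonneg_of_le_pi hθ₀ (by linarith [Real.pi_pos])
  have hr : 0 < r := hv.trans hrv
  have hsmall : 2 * N * (Real.cos θ + Real.sin θ) < r := by
    have := two_mul_mul_le_of_fNk_eq_zero hv hk hroot
    rw [abs_of_pos hc, abs_of_nonneg hs] at this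
    linarith
  have hlarge : r * (Real.cos θ + Real.sin θ) ≤ 2 * N + 1 := by
    exact_mod_cast le_two_mul_add_one_of_eq_ceil_sub_one hNdef
  subst hξ
  change cD _ = gaussSquare N
  exact Set.Subset.antisymm
    (Set.image_subset_iff.2 fun _ hz => cdg_mem_gaussSquare hr hc hs hlarge hz)
    (gaussSquare_subset_cD hr hc hs hsmall)

/-- With `N := ⌈(r(c+s)+1)/2⌉ − 1` : if `r > v_N^{(k)}(θ)` and `(C_k)` holds for the
`ξ`-expansion, then `ξ` has a square digit set (of size `N`). -/
theorem stmt13 (r θ : ℝ) (hr : 1 < r) (hθ : θ ∈ Set.Icc 0 (Real.pi / 4))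
    (ξ : ℂ) (hξ : ξ = (r : ℂ) * Complex.exp (θ * Complex.I))
    (k : ℕ) (hk : 2 ≤ k)
    (N : ℕ) (hNdef : (N : ℤ) = ⌈(r * (Real.cos θ + Real.sin θ) + 1) / 2⌉ - 1)
    (v : ℝ) (hv : 0 < v) (hroot : fNk θ N k v = 0)
    (hrv : v < r) (hCk : propC ξ k) :
    squareDS ξ N :=
  stmt13_general r θ hθ ξ hξ k hk N hNdef v hv hroot hrv
end
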